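/- arXiv:0808.3760 — 9 statements merged into one kernel-verified Lean document; each statement's English description precedes it below -/
import Mathlib

section
/- For all positive integers s, the maximum number T(s) of cyclic triangles over all tournaments on s vertices equals (s+1)s(s-1)/24 if s is odd and (s+2)s(s-2)/24 if s is even. -/
/-- A tournament on `Fin n`: `r i j = true` means the edge is directed from `i` to `j`. -/
def IsTournament {n : ℕ} (r : Fin n → Fin n → Bool) : Prop :=
  (∀ i, r i i = false) ∧ ∀ i j : Fin n, i ≠ j → r i j = !r j i

open scoped Classical in
/-- The number of cyclic (directed) triangles of a tournament: the number of
3-element vertex sets whose three edges form a directed 3-cycle. -/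
noncomputable def cycCount {n : ℕ} (r : Fin n → Fin n → Bool) : ℕ :=
  (((Finset.univ : Finset (Fin n)).powersetCard 3).filter
    (fun t => ∃ a b c : Fin n, t = {a, b, c} ∧ r a b = true ∧ r b c = true ∧ r c a = true)).card

/-- The outdegree of vertex `i`. -/
def outdeg {n : ℕ} (r : Fin n → Fin n → Bool) (i : Fin n) : ℕ :=
  (Finset.univ.filter (fun j => r i j = true)).card


/-- The claimed formula for `T(s)`: `(s+1)s(s-1)/24` for odd `s`, `(s+2)s(s-2)/24` for even `s`. -/
def Tform (s : ℕ) : ℕ :=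
  if s % 2 = 1 then (s + 1) * s * (s - 1) / 24 else (s + 2) * s * (s - 2) / 24

/-!
A 3-set of vertices that is not a cyclic triangle has exactly one vertex beating the other two,
so a tournament with outdegrees `dᵢ` has `C(s,3) - ∑ᵢ C(dᵢ,2)` cyclic triangles, where
`∑ᵢ dᵢ = C(s,2)`. For `t = ⌊(s-1)/2⌋` convexity gives `C(d,2) + C(t+1,2) ≥ t d`, with equality
exactly for `d ∈ {t, t+1}`; summing over the vertices yields the bound, and it is attained by any
tournament all of whose outdegrees are `t` or `t + 1`, e.g. the one in which, for `i < j`, `i`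
beats `j` iff `i + j` is even.
-/

open Finset

lemma Nat.two_mul_choose_two_add (m : ℕ) : 2 * m.choose 2 + m = m * m := by
  induction m with
  | zero => rfl
  | succ m ih =>
    rw [Nat.choose_succ_succ', Nat.choose_one_right]
    linarith

lemma Nat.six_mul_choose_three_add (m : ℕ) :
    6 * m.choose 3 + 3 * (m * m) = m * m * m + 2 * m := by
  induction m with
  | zero => rfl
  | succ m ih =>
    have := Nat.two_mul_choose_two_add m
    rw [Nat.choose_succ_succ']
    linarith

-- `2 (C(d,2) + C(t+1,2) - t d) = (d - t) (d - t - 1)`, which vanishes exactly at `d = t, t + 1`.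
lemma Nat.mul_le_choose_two_add_choose_two (d t : ℕ) : t * d ≤ d.choose 2 + (t + 1).choose 2 := by
  have hd := Nat.two_mul_choose_two_add d
  have ht := Nat.two_mul_choose_two_add (t + 1)
  rcases le_or_gt d t with h | h <;> nlinarith

lemma Nat.choose_two_add_choose_two_of_mem {d t : ℕ} (h : d = t ∨ d = t + 1) :
    d.choose 2 + (t + 1).choose 2 = t * d := by
  have hd := Nat.two_mul_choose_two_add d
  have ht := Nat.two_mul_choose_two_add (t + 1)
  rcases h with rfl | rfl <;> nlinarith

lemma Tform_add_mul_choose_two (n : ℕ) :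
    Tform n + (n - 1) / 2 * n.choose 2 = n.choose 3 + n * ((n - 1) / 2 + 1).choose 2 := by
  have h2 := Nat.two_mul_choose_two_add n
  have h3 := Nat.six_mul_choose_three_add n
  obtain ⟨t, rfl | rfl⟩ | rfl : (∃ t, n = 2 * t + 1 ∨ n = 2 * t + 2) ∨ n = 0 := by
    rcases n with _ | n
    · simp
    · exact Or.inl ⟨n / 2, by omega⟩
  · have ht := Nat.two_mul_choose_two_add (t + 1)
    have key : 24 * ((2 * t + 1).choose 3 + (2 * t + 1) * (t + 1).choose 2)
        = 24 * (t * (2 * t + 1).choose 2) + (2 * t + 1 + 1) * (2 * t + 1) * (2 * t) := by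
      zify at *
      linear_combination 4 * h3 + 12 * (2 * (t : ℤ) + 1) * ht - 12 * (t : ℤ) * h2
    rw [Tform, if_pos (by omega), show (2 * t + 1 - 1) / 2 = t by omega, Nat.add_sub_cancel]
    omega
  · have ht := Nat.two_mul_choose_two_add (t + 1)
    have key : 24 * ((2 * t + 2).choose 3 + (2 * t + 2) * (t + 1).choose 2)
        = 24 * (t * (2 * t + 2).choose 2) + (2 * t + 2 + 2) * (2 * t + 2) * (2 * t) := by
      zify at *
      linear_combination 4 * h3 + 12 * (2 * (t : ℤ) + 2) * ht - 12 * (t : ℤ) * h2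
    rw [Tform, if_neg (by omega), show (2 * t + 2 - 1) / 2 = t by omega, Nat.add_sub_cancel]
    omega
  · rfl

section Tournament

variable {n : ℕ} {r : Fin n → Fin n → Bool}

def IsCyclicTriple (r : Fin n → Fin n → Bool) (t : Finset (Fin n)) : Prop :=
  ∃ a b c : Fin n, t = {a, b, c} ∧ r a b = true ∧ r b c = true ∧ r c a = true

def Dominates (r : Fin n → Fin n → Bool) (i : Fin n) (t : Finset (Fin n)) : Prop :=
  i ∈ t ∧ ∀ j ∈ t, j ≠ i → r i j = true

open scoped Classical in
lemma cycCount_eq_card_filter_isCyclicTriple :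
    cycCount r = #{t ∈ univ.powersetCard 3 | IsCyclicTriple r t} := by
  unfold cycCount IsCyclicTriple
  congr

lemma dominates_triple {a b c : Fin n} (hb : r a b = true) (hc : r a c = true) :
    Dominates r a {a, b, c} :=
  ⟨mem_insert_self _ _, by simp [hb, hc]⟩

namespace IsTournament

lemma ne_of_eq_true (hr : IsTournament r) {i j : Fin n} (h : r i j = true) : i ≠ j := by
  rintro rfl
  simp [hr.1] at h

lemma eq_false_of_eq_true (hr : IsTournament r) {i j : Fin n} (h : r i j = true) :
    r j i = false := by
  simpa [h] using hr.2 j i (hr.ne_of_eq_true h).symm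

lemma eq_true_of_eq_false (hr : IsTournament r) {i j : Fin n} (hij : i ≠ j) (h : r i j = false) :
    r j i = true := by
  simpa [h] using hr.2 j i hij.symm

lemma outdeg_add_indeg (hr : IsTournament r) (i : Fin n) :
    outdeg r i + #(univ.filter fun j => r j i = true) = n - 1 := by
  have hdisj : Disjoint (univ.filter fun j => r i j = true) (univ.filter fun j => r j i = true) :=
    disjoint_filter.2 fun j _ h h' => by simp [hr.eq_false_of_eq_true h] at h'
  have hunion : (univ.filter fun j => r i j = true ∨ r j i = true) = univ.erase i := by
    ext j
    by_cases hj : j = i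
    · subst hj; simp [hr.1]
    · cases h : r i j <;> simp [hj, h, hr.eq_true_of_eq_false (Ne.symm hj)]
  rw [outdeg, ← card_union_of_disjoint hdisj, ← filter_or, hunion, card_erase_of_mem (mem_univ i),
    card_univ, Fintype.card_fin]

lemma sum_outdeg (hr : IsTournament r) : ∑ i, outdeg r i = n.choose 2 := by
  have hin : ∑ i, #(univ.filter fun j => r j i = true) = ∑ i, outdeg r i := by
    simp only [outdeg, card_filter]
    exact sum_comm
  have := sum_congr rfl fun i (_ : i ∈ univ) => hr.outdeg_add_indeg i
  rw [sum_add_distrib, hin, sum_const, card_univ, Fintype.card_fin, smul_eq_mul] at this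
  rw [Nat.choose_two_right]
  omega

lemma dominates_unique (hr : IsTournament r) {t : Finset (Fin n)} {i i' : Fin n}
    (hi : Dominates r i t) (hi' : Dominates r i' t) : i = i' := by
  by_contra hne
  have h := hi.2 i' hi'.1 (Ne.symm hne)
  simpa [hr.eq_false_of_eq_true h] using hi'.2 i hi.1 hne

lemma not_dominates_of_isCyclicTriple (hr : IsTournament r) {t : Finset (Fin n)}
    (ht : IsCyclicTriple r t) (i : Fin n) : ¬ Dominates r i t := by
  obtain ⟨a, b, c, rfl, hab, hbc, hca⟩ := ht
  rintro ⟨hi, hdom⟩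
  have hba := hr.eq_false_of_eq_true hab
  have hcb := hr.eq_false_of_eq_true hbc
  have hac := hr.eq_false_of_eq_true hca
  simp only [mem_insert, mem_singleton] at hi
  rcases hi with rfl | rfl | rfl
  · simpa [hac] using hdom c (by simp) (hr.ne_of_eq_true hca)
  · simpa [hba] using hdom a (by simp) (hr.ne_of_eq_true hab)
  · simpa [hcb] using hdom b (by simp) (hr.ne_of_eq_true hbc)

lemma exists_dominates_of_not_isCyclicTriple (hr : IsTournament r) {t : Finset (Fin n)}
    (ht : #t = 3) (hnc : ¬ IsCyclicTriple r t) : ∃ i, Dominates r i t := by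
  obtain ⟨a, b, c, hab, hac, hbc, rfl⟩ := card_eq_three.1 ht
  have rba := hr.2 b a hab.symm
  have rcb := hr.2 c b hbc.symm
  have rac := hr.2 a c hac
  have hb : Dominates r b {b, a, c} → ∃ i, Dominates r i {a, b, c} :=
    fun h => ⟨b, by rwa [insert_comm]⟩
  have hc : Dominates r c {c, a, b} → ∃ i, Dominates r i {a, b, c} :=
    fun h => ⟨c, by rwa [insert_comm, pair_comm] at h⟩
  cases rab : r a b <;> cases rbc : r b c <;> cases rca : r c a <;>
    simp only [rab, rbc, rca, Bool.not_true, Bool.not_false] at rba rcb rac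
  · exact (hnc ⟨a, c, b, by rw [pair_comm], rac, rcb, rba⟩).elim
  · exact hc (dominates_triple rca rcb)
  · exact hb (dominates_triple rba rbc)
  · exact hb (dominates_triple rba rbc)
  · exact ⟨a, dominates_triple rab rac⟩
  · exact hc (dominates_triple rca rcb)
  · exact ⟨a, dominates_triple rab rac⟩
  · exact (hnc ⟨a, b, c, rfl, rab, rbc, rca⟩).elim

section Counting

open scoped Classical

lemma filter_dominates_eq_image_insert (hr : IsTournament r) (i : Fin n) :
    {t ∈ (univ : Finset (Fin n)).powersetCard 3 | Dominates r i t} =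
      (({j | r i j = true} : Finset (Fin n)).powersetCard 2).image (insert i) := by
  ext t
  simp only [mem_filter, mem_image, mem_powersetCard, subset_iff, mem_univ, true_and]
  constructor
  · rintro ⟨⟨-, ht⟩, hit, hdom⟩
    refine ⟨t.erase i, ⟨fun j hj => hdom j (mem_of_mem_erase hj) (ne_of_mem_erase hj), ?_⟩,
      insert_erase hit⟩
    rw [card_erase_of_mem hit, ht]
  · rintro ⟨p, ⟨hp, hp2⟩, rfl⟩
    have hip : i ∉ p := fun h => by simpa [hr.1] using hp h
    refine ⟨⟨fun _ _ => trivial, by rw [card_insert_of_notMem hip, hp2]⟩, mem_insert_self i p,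
      fun j hj hji => hp ((mem_insert.1 hj).resolve_left hji)⟩

lemma card_filter_dominates (hr : IsTournament r) (i : Fin n) :
    #{t ∈ (univ : Finset (Fin n)).powersetCard 3 | Dominates r i t} = (outdeg r i).choose 2 := by
  rw [hr.filter_dominates_eq_image_insert, card_image_of_injOn, card_powersetCard, outdeg]
  intro p hp q hq hpq
  have hi : ∀ p ∈ ((univ.filter fun j => r i j = true).powersetCard 2 : Finset (Finset (Fin n))),
      i ∉ p := fun p hp h => by simpa [hr.1] using (mem_powersetCard.1 hp).1 h
  rw [← erase_insert (hi p hp), ← erase_insert (hi q hq)]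
  exact congrArg (·.erase i) hpq

lemma card_filter_not_isCyclicTriple (hr : IsTournament r) :
    #{t ∈ (univ : Finset (Fin n)).powersetCard 3 | ¬ IsCyclicTriple r t} =
      ∑ i, #{t ∈ (univ : Finset (Fin n)).powersetCard 3 | Dominates r i t} := by
  rw [← card_biUnion]
  · congr 1
    ext t
    simp only [mem_filter, mem_biUnion, mem_univ, true_and, mem_powersetCard_univ]
    constructor
    · rintro ⟨ht, hc⟩
      obtain ⟨i, hi⟩ := hr.exists_dominates_of_not_isCyclicTriple ht hc
      exact ⟨i, ht, hi⟩
    · rintro ⟨i, ht, hi⟩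
      exact ⟨ht, fun hc => hr.not_dominates_of_isCyclicTriple hc i hi⟩
  · exact fun i _ i' _ hne => disjoint_filter.2 fun t _ hi hi' => hne (hr.dominates_unique hi hi')

lemma cycCount_add_sum_choose_two_outdeg (hr : IsTournament r) :
    cycCount r + ∑ i, (outdeg r i).choose 2 = n.choose 3 := by
  simp_rw [cycCount_eq_card_filter_isCyclicTriple, ← hr.card_filter_dominates,
    ← hr.card_filter_not_isCyclicTriple, card_filter_add_card_filter_not, card_powersetCard,
    card_univ, Fintype.card_fin]

lemma cycCount_add_mul_choose_two_le (hr : IsTournament r) (t : ℕ) :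
    cycCount r + t * n.choose 2 ≤ n.choose 3 + n * (t + 1).choose 2 := by
  have h := sum_le_sum fun i (_ : i ∈ univ) => Nat.mul_le_choose_two_add_choose_two (outdeg r i) t
  rw [sum_add_distrib, sum_const, card_univ, Fintype.card_fin, smul_eq_mul, ← mul_sum,
    hr.sum_outdeg] at h
  have := hr.cycCount_add_sum_choose_two_outdeg
  omega

lemma cycCount_add_mul_choose_two_eq (hr : IsTournament r) {t : ℕ}
    (ht : ∀ i, outdeg r i = t ∨ outdeg r i = t + 1) :
    cycCount r + t * n.choose 2 = n.choose 3 + n * (t + 1).choose 2 := by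
  have h := sum_congr rfl fun i (_ : i ∈ univ) => Nat.choose_two_add_choose_two_of_mem (ht i)
  rw [sum_add_distrib, sum_const, card_univ, Fintype.card_fin, smul_eq_mul, ← mul_sum,
    hr.sum_outdeg] at h
  have := hr.cycCount_add_sum_choose_two_outdeg
  omega

end Counting

end IsTournament

end Tournament

def parityBeats (i j : ℕ) : Bool :=
  if (i + j) % 2 = 0 then decide (i < j) else decide (j < i)

def parityTournament (s : ℕ) : Fin s → Fin s → Bool := fun i j => parityBeats i j

lemma parityBeats_self (i : ℕ) : parityBeats i i = false := by
  simp [parityBeats]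

lemma parityBeats_eq_not {i j : ℕ} (h : i ≠ j) : parityBeats i j = !parityBeats j i := by
  rw [parityBeats, parityBeats, Nat.add_comm j i]
  split_ifs <;> simp only [Bool.eq_not_iff, ne_eq, decide_eq_decide] <;> omega

lemma isTournament_parityTournament (s : ℕ) : IsTournament (parityTournament s) :=
  ⟨fun i => parityBeats_self i, fun _ _ hij => parityBeats_eq_not (Fin.val_ne_of_ne hij)⟩

-- Vertex `i` beats the smaller vertices of the other parity and the larger ones of its own parity.
lemma card_filter_range_parityBeats (i m : ℕ) :
    #{j ∈ range m | parityBeats i j = true} =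
      if m ≤ i then (m + i % 2) / 2 else (i + 1) / 2 + (m - 1 - i) / 2 := by
  induction m with
  | zero => simp
  | succ m ih =>
    rw [range_add_one, filter_insert]
    by_cases h : parityBeats i m = true
    · rw [if_pos h, card_insert_of_notMem (by simp), ih]
      rw [parityBeats] at h
      split_ifs at h ⊢ <;> simp only [decide_eq_true_eq] at h <;> omega
    · rw [if_neg h, ih]
      rw [parityBeats] at h
      split_ifs at h ⊢ <;> simp only [decide_eq_true_eq] at h <;> omega

lemma outdeg_parityTournament (s : ℕ) (i : Fin s) :
    outdeg (parityTournament s) i = (s - 1) / 2 ∨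
      outdeg (parityTournament s) i = (s - 1) / 2 + 1 := by
  have h : outdeg (parityTournament s) i = #{j ∈ range s | parityBeats i j = true} := by
    rw [outdeg, card_filter, card_filter]
    exact Fin.sum_univ_eq_sum_range (fun j => if parityBeats i j = true then 1 else 0) s
  rw [h, card_filter_range_parityBeats, if_neg (by omega)]
  omega

theorem max_cycCount_general (s : ℕ) :
    IsGreatest {c : ℕ | ∃ r : Fin s → Fin s → Bool, IsTournament r ∧ cycCount r = c}
      (Tform s) := by
  have hT := Tform_add_mul_choose_two s
  refine ⟨⟨parityTournament s, isTournament_parityTournament s, ?_⟩, ?_⟩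
  · have := (isTournament_parityTournament s).cycCount_add_mul_choose_two_eq
      (outdeg_parityTournament s)
    omega
  · rintro _ ⟨r, hr, rfl⟩
    have := hr.cycCount_add_mul_choose_two_le ((s - 1) / 2)
    omega

/-- For every positive integer `s`, the maximum number of cyclic triangles over all
tournaments on `s` vertices is `(s+1)s(s-1)/24` if `s` is odd and `(s+2)s(s-2)/24`
if `s` is even. -/
theorem max_cycCount (s : ℕ) (hs : 0 < s) :
    IsGreatest {c : ℕ | ∃ r : Fin s → Fin s → Bool, IsTournament r ∧ cycCount r = c}
      (Tform s) :=
  max_cycCount_general s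
end

section
/- For all positive integers s, F_2(s) \ge T(s), where F_2(s) is the maximum over all 2-colorings (colors I and II) of the edges of the complete graph on vertex set {1,...,s} of the number of triples a<b<c with edges (a,b) and (b,c) colored I and edge (a,c) colored II; in fact the coloring assigning color II to (a,b) exactly when b-a is even achieves at least T(s) such triples. -/
/-- Given a 2-coloring `col` of the edges of the complete graph on `Fin s`
(`col a b` for `a < b`; `false` = color I, `true` = color II), the number of triples
`a < b < c` with `(a,b)` and `(b,c)` of color I and `(a,c)` of color II. -/
def tripCount2 (s : ℕ) (col : Fin s → Fin s → Bool) : ℕ :=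
  (Finset.univ.filter (fun t : Fin s × Fin s × Fin s =>
    t.1 < t.2.1 ∧ t.2.1 < t.2.2 ∧ col t.1 t.2.1 = false ∧ col t.2.1 t.2.2 = false ∧
      col t.1 t.2.2 = true)).card

/-!
In the parity coloring a triple `a < b < c` is counted exactly when `b - a` and `c - b` are both
odd (then `c - a` is automatically even). Grouping by the middle vertex `b`, there are
`⌈b/2⌉ = (b+1)/2` choices of `a` and `(s-b)/2` choices of `c`, so the count is
`∑_{b<s} (b+1)/2 * ((s-b)/2)`. Going from `s` to `s + 2` this sum grows by
`∑_{b≤s} (b+1)/2 = ⌊(s+1)²/4⌋`, which is exactly the growth of `T`; hence the count equals `T(s)`.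
-/

open Finset

theorem Fin.card_filter_univ_val (s : ℕ) (p : ℕ → Prop) [DecidablePred p] :
    #{i : Fin s | p i} = #{n ∈ range s | p n} := by
  simp only [card_filter]
  exact Fin.sum_univ_eq_sum_range (fun n => if p n then 1 else 0) s

theorem card_range_filter_lt_odd_sub (v n : ℕ) :
    #{a ∈ range n | a < v ∧ ¬ 2 ∣ v - a} = (v + 1) / 2 - (v + 1 - n) / 2 := by
  induction n with
  | zero => simp
  | succ n ih =>
    rw [range_add_one, filter_insert]
    split_ifs with h
    · rw [card_insert_of_notMem (by simp), ih]
      omega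
    · rw [ih]
      omega

theorem card_range_filter_gt_odd_sub (v n : ℕ) :
    #{c ∈ range n | v < c ∧ ¬ 2 ∣ c - v} = (n - v) / 2 := by
  induction n with
  | zero => simp
  | succ n ih =>
    rw [range_add_one, filter_insert]
    split_ifs with h
    · rw [card_insert_of_notMem (by simp), ih]
      omega
    · rw [ih]
      omega

theorem sum_range_succ_div_two (n : ℕ) : ∑ v ∈ range n, (v + 1) / 2 = n * n / 4 := by
  induction n with
  | zero => simp
  | succ n ih =>
    rw [sum_range_succ, ih]
    rcases Nat.even_or_odd' n with ⟨k, rfl | rfl⟩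
    · have hsq : (2 * k + 1) * (2 * k + 1) = 4 * (k * k + k) + 1 := by ring
      have hsq' : 2 * k * (2 * k) = 4 * (k * k) := by ring
      omega
    · have hsq : (2 * k + 1 + 1) * (2 * k + 1 + 1) = 4 * (k * k + 2 * k + 1) := by ring
      have hsq' : (2 * k + 1) * (2 * k + 1) = 4 * (k * k + k) + 1 := by ring
      omega

theorem Tform_add_two (s : ℕ) : Tform (s + 2) = Tform s + (s + 1) * (s + 1) / 4 := by
  rcases Nat.even_or_odd' s with ⟨k, rfl | rfl⟩
  · have hnum : (2 * k + 2 + 2) * (2 * k + 2) * (2 * k + 2 - 2)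
        = (2 * k + 2) * (2 * k) * (2 * k - 2) + 24 * (k * k + k) := by
      rcases k with _ | k
      · rfl
      · simp only [Nat.add_sub_cancel, show 2 * (k + 1) - 2 = 2 * k by omega]
        ring
    have hsq : (2 * k + 1) * (2 * k + 1) = 4 * (k * k + k) + 1 := by ring
    simp only [Tform, show (2 * k + 2) % 2 ≠ 1 by omega, show 2 * k % 2 ≠ 1 by omega, if_false,
      hnum, hsq]
    omega
  · have hnum : (2 * k + 1 + 2 + 1) * (2 * k + 1 + 2) * (2 * k + 1 + 2 - 1)
        = (2 * k + 1 + 1) * (2 * k + 1) * (2 * k + 1 - 1) + 24 * ((k + 1) * (k + 1)) := by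
      simp only [Nat.add_sub_cancel, show 2 * k + 1 + 2 - 1 = 2 * k + 2 by omega]
      ring
    have hsq : (2 * k + 1 + 1) * (2 * k + 1 + 1) = 4 * ((k + 1) * (k + 1)) := by ring
    simp only [Tform, show (2 * k + 1 + 2) % 2 = 1 by omega, show (2 * k + 1) % 2 = 1 by omega,
      if_true, hnum, hsq]
    omega

def parityTripleCount (s : ℕ) : ℕ := ∑ b ∈ range s, (b + 1) / 2 * ((s - b) / 2)

theorem parityTripleCount_add_two (s : ℕ) :
    parityTripleCount (s + 2) = parityTripleCount s + (s + 1) * (s + 1) / 4 := by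
  have hshift : ∀ b ∈ range (s + 1),
      (b + 1) / 2 * ((s + 2 - b) / 2) = (b + 1) / 2 * ((s - b) / 2) + (b + 1) / 2 := by
    intro b hb
    rw [mem_range] at hb
    rw [show (s + 2 - b) / 2 = (s - b) / 2 + 1 by omega, Nat.mul_add_one]
  rw [parityTripleCount, sum_range_succ, show (s + 2 - (s + 1)) / 2 = 0 by omega, Nat.mul_zero,
    Nat.add_zero, sum_congr rfl hshift, sum_add_distrib, sum_range_succ_div_two, sum_range_succ, Nat.sub_self,
    Nat.zero_div, Nat.mul_zero, Nat.add_zero, parityTripleCount]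

theorem parityTripleCount_eq_Tform (s : ℕ) : parityTripleCount s = Tform s := by
  induction s using Nat.twoStepInduction with
  | zero => rfl
  | one => rfl
  | more s ih _ => rw [parityTripleCount_add_two, Tform_add_two, ih]

def parityColoring (s : ℕ) (a b : Fin s) : Bool := decide (2 ∣ (b.val - a.val))

theorem tripCount2_parityColoring_eq_sum (s : ℕ) :
    tripCount2 s (parityColoring s) = ∑ b : Fin s,
      #{a : Fin s | a.val < b ∧ ¬ 2 ∣ b.val - a} * #{c : Fin s | b.val < c ∧ ¬ 2 ∣ c.val - b} := by
  rw [tripCount2, card_eq_sum_card_fiberwise (f := fun t => t.2.1) (fun _ _ => mem_univ _)]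
  refine sum_congr rfl fun b _ => ?_
  have hinj : Function.Injective fun p : Fin s × Fin s => (p.1, b, p.2) := fun p q h => by
    simpa [Prod.ext_iff] using h
  rw [← card_product, ← card_image_of_injective _ hinj]
  congr 1
  ext ⟨a, b', c⟩
  simp only [parityColoring, mem_filter, mem_univ, true_and, mem_image, mem_product,
    Prod.mk.injEq, Prod.exists, decide_eq_false_iff_not, decide_eq_true_eq, Fin.lt_def]
  constructor
  · rintro ⟨⟨hab, hbc, hodd₁, hodd₂, -⟩, rfl⟩
    exact ⟨a, c, ⟨⟨hab, hodd₁⟩, hbc, hodd₂⟩, rfl, rfl, rfl⟩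
  · rintro ⟨a, c, ⟨⟨hab, hodd₁⟩, hbc, hodd₂⟩, rfl, rfl, rfl⟩
    exact ⟨⟨hab, hbc, hodd₁, hodd₂, by omega⟩, rfl⟩

theorem tripCount2_parityColoring (s : ℕ) : tripCount2 s (parityColoring s) = Tform s := by
  rw [tripCount2_parityColoring_eq_sum, ← parityTripleCount_eq_Tform, parityTripleCount,
    ← Fin.sum_univ_eq_sum_range (fun b => (b + 1) / 2 * ((s - b) / 2))]
  refine sum_congr rfl fun b _ => ?_
  rw [Fin.card_filter_univ_val s (fun a => a < b ∧ ¬ 2 ∣ b.val - a), card_range_filter_lt_odd_sub,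
    Fin.card_filter_univ_val s (fun c => b < c ∧ ¬ 2 ∣ c - b.val), card_range_filter_gt_odd_sub]
  have hb := b.isLt
  congr 1
  omega

theorem F2_ge_T_general (s : ℕ) :
    Tform s ≤ tripCount2 s (fun a b => decide (2 ∣ (b.val - a.val))) :=
  (tripCount2_parityColoring s).ge

/-- `F₂(s) ≥ T(s)`: the 2-coloring assigning color II to `(a,b)` exactly when `b - a` is even
has at least `T(s)` triples `a < b < c` with `(a,b),(b,c)` of color I and `(a,c)` of
color II. -/
theorem F2_ge_T (s : ℕ) (hs : 0 < s) :
    Tform s ≤ tripCount2 s (fun a b => decide (2 ∣ (b.val - a.val))) :=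
  F2_ge_T_general s
end

section
/- For all positive integers s, F_2(s) \le T(s): given any 2-coloring of the edges of the complete graph on {1,...,s} with colors I and II, the number of triples a<b<c with (a,b),(b,c) colored I and (a,c) colored II is at most the maximum number of cyclic triangles in a tournament on s vertices. -/
/-- `T(s)`: the maximum number of cyclic triangles over all tournaments on `s` vertices. -/
noncomputable def Tmax (s : ℕ) : ℕ :=
  sSup {c : ℕ | ∃ r : Fin s → Fin s → Bool, IsTournament r ∧ cycCount r = c}

/-
Orient the edge `{a, b}`, `a < b`, as `a → b` if it has color I and `b → a` if it has color II.
Then an `I,I,II` triple `a < b < c` becomes the directed 3-cycle `a → b → c → a`, and distinct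
triples give distinct vertex sets, so `F₂(s)` is at most the number of cyclic triangles of this
tournament, hence at most `T(s)`.
-/

theorem Finset.eq_of_triple_eq {α : Type*} [LinearOrder α] {a b c a' b' c' : α}
    (hab : a < b) (hbc : b < c) (hab' : a' < b') (hbc' : b' < c')
    (h : ({a, b, c} : Finset α) = {a', b', c'}) : a = a' ∧ b = b' ∧ c = c' := by
  have mem : ∀ x, x ∈ ({a, b, c} : Finset α) ↔ x ∈ ({a', b', c'} : Finset α) := by simp [h]
  simp only [Finset.mem_insert, Finset.mem_singleton] at mem
  have := mem a; have := mem b; have := mem c; have := mem a'; have := mem b'; have := mem c'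
  grind

theorem cycCount_le_Tmax {n : ℕ} {r : Fin n → Fin n → Bool} (hr : IsTournament r) :
    cycCount r ≤ Tmax n := by
  refine le_csSup ⟨((Finset.univ : Finset (Fin n)).powersetCard 3).card, ?_⟩ ⟨r, hr, rfl⟩
  rintro _ ⟨r', -, rfl⟩
  exact Finset.card_filter_le _ _

def orientColoring {n : ℕ} (col : Fin n → Fin n → Bool) (i j : Fin n) : Bool :=
  if i < j then !col i j else if j < i then col j i else false

theorem isTournament_orientColoring {n : ℕ} (col : Fin n → Fin n → Bool) :
    IsTournament (orientColoring col) := by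
  refine ⟨fun i => by simp [orientColoring], fun i j hij => ?_⟩
  rcases hij.lt_or_gt with h | h <;> simp [orientColoring, h, h.not_gt]

theorem tripCount2_le_cycCount_orientColoring (s : ℕ) (col : Fin s → Fin s → Bool) :
    tripCount2 s col ≤ cycCount (orientColoring col) := by
  unfold tripCount2 cycCount
  apply Finset.card_le_card_of_injOn (fun t => ({t.1, t.2.1, t.2.2} : Finset (Fin s)))
  · rintro ⟨a, b, c⟩ ht
    simp only [Finset.coe_filter, Finset.mem_univ, true_and, Set.mem_ofPred_eq] at ht
    obtain ⟨hab, hbc, hIab, hIbc, hIIac⟩ := ht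
    have hac : a < c := hab.trans hbc
    simp only [Finset.coe_filter, Finset.mem_powersetCard, Set.mem_ofPred_eq]
    refine ⟨⟨Finset.subset_univ _, Finset.card_eq_three.mpr ⟨a, b, c, hab.ne, hac.ne, hbc.ne, rfl⟩⟩,
      a, b, c, rfl, ?_, ?_, ?_⟩
    · simp [orientColoring, hab, hIab]
    · simp [orientColoring, hbc, hIbc]
    · simp [orientColoring, hac, hac.not_gt, hIIac]
  · rintro ⟨a, b, c⟩ ht ⟨a', b', c'⟩ ht' heq
    simp only [Finset.coe_filter, Finset.mem_univ, true_and, Set.mem_ofPred_eq] at ht ht'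
    obtain ⟨rfl, rfl, rfl⟩ := Finset.eq_of_triple_eq ht.1 ht.2.1 ht'.1 ht'.2.1 heq
    rfl

theorem F2_le_T_general (s : ℕ) (col : Fin s → Fin s → Bool) :
    tripCount2 s col ≤ Tmax s :=
  (tripCount2_le_cycCount_orientColoring s col).trans
    (cycCount_le_Tmax (isTournament_orientColoring col))

/-- `F₂(s) ≤ T(s)`: for any 2-coloring of the edges of the complete graph on `s` vertices,
the number of `I,I,II` triples is at most the maximum number of cyclic triangles in a
tournament on `s` vertices. -/
theorem F2_le_T (s : ℕ) (hs : 0 < s) (col : Fin s → Fin s → Bool) :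
    tripCount2 s col ≤ Tmax s :=
  F2_le_T_general s col
end

section
/- Define g(1)=g(2)=0 and g(s)=max over a+b+c=s (with a,b,c positive integers) of g(a)+g(b)+g(c)+abc. If s is a power of 3, then g(s) = (1/4) C(s+1,3) = T(s), where T(s)=(s+1)s(s-1)/24 for odd s. -/
/-!
Since `(a + b + c)^3 - a^3 - b^3 - c^3 = 3(a + b)(b + c)(c + a) ≥ 24abc` by AM-GM, strong
induction along the recursion gives `24 g(s) + s ≤ s^3` for every `s ≥ 1`. For `s = 3n` the
balanced split `n + n + n` gives `24 g(3n) + 3n ≥ 3(24 g(n) + n) + 24n^3`, so the reverse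
inequality `s^3 ≤ 24 g(s) + s`, trivial at `s = 1`, propagates to every power of `3`. Finally
`s^3 - s = (s + 1)s(s - 1) = 6 C(s+1, 3)`.
-/

lemma sum_cubes_add_mul_le_cube_sum (a b c : ℕ) :
    a ^ 3 + b ^ 3 + c ^ 3 + 24 * (a * b * c) ≤ (a + b + c) ^ 3 := by
  zify
  nlinarith [mul_nonneg (Int.natCast_nonneg a) (sq_nonneg ((b : ℤ) - c)),
    mul_nonneg (Int.natCast_nonneg b) (sq_nonneg ((c : ℤ) - a)),
    mul_nonneg (Int.natCast_nonneg c) (sq_nonneg ((a : ℤ) - b))]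

lemma twentyFour_mul_add_self_le_cube {g : ℕ → ℕ} (h1 : g 1 = 0) (h2 : g 2 = 0)
    (hsplit : ∀ s, 3 ≤ s → ∃ a b c, 0 < a ∧ 0 < b ∧ 0 < c ∧ a + b + c = s ∧
      g s = g a + g b + g c + a * b * c) :
    ∀ s, 1 ≤ s → 24 * g s + s ≤ s ^ 3 := by
  intro s
  induction s using Nat.strong_induction_on with
  | _ s ih =>
    intro hs
    rcases (by omega : s = 1 ∨ s = 2 ∨ 3 ≤ s) with rfl | rfl | hs3
    · simp [h1]
    · simp [h2]
    · obtain ⟨a, b, c, ha, hb, hc, rfl, hval⟩ := hsplit s hs3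
      have iha := ih a (by omega) ha
      have ihb := ih b (by omega) hb
      have ihc := ih c (by omega) hc
      calc 24 * g (a + b + c) + (a + b + c)
          = (24 * g a + a) + (24 * g b + b) + (24 * g c + c) + 24 * (a * b * c) := by
            rw [hval]; ring
        _ ≤ a ^ 3 + b ^ 3 + c ^ 3 + 24 * (a * b * c) := by gcongr
        _ ≤ (a + b + c) ^ 3 := sum_cubes_add_mul_le_cube_sum a b c

lemma cube_le_twentyFour_mul_add_self_pow_three {g : ℕ → ℕ}
    (hsuper : ∀ a b c, 0 < a → 0 < b → 0 < c →
      g a + g b + g c + a * b * c ≤ g (a + b + c))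
    (k : ℕ) : (3 ^ k) ^ 3 ≤ 24 * g (3 ^ k) + 3 ^ k := by
  induction k with
  | zero => simp
  | succ k ih =>
    have hpos : 0 < 3 ^ k := by positivity
    have hbalanced := hsuper _ _ _ hpos hpos hpos
    rw [show 3 ^ k + 3 ^ k + 3 ^ k = 3 ^ (k + 1) by ring] at hbalanced
    calc (3 ^ (k + 1)) ^ 3 = 3 * (3 ^ k) ^ 3 + 24 * (3 ^ k * 3 ^ k * 3 ^ k) := by ring
      _ ≤ 3 * (24 * g (3 ^ k) + 3 ^ k) + 24 * (3 ^ k * 3 ^ k * 3 ^ k) := by gcongr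
      _ = 24 * (g (3 ^ k) + g (3 ^ k) + g (3 ^ k) + 3 ^ k * 3 ^ k * 3 ^ k) + 3 ^ (k + 1) := by
        ring
      _ ≤ 24 * g (3 ^ (k + 1)) + 3 ^ (k + 1) := by gcongr

lemma succ_choose_three_mul_six (n : ℕ) : (n + 1).choose 3 * 6 = (n + 1) * n * (n - 1) := by
  rw [mul_comm, show 6 = Nat.factorial 3 from rfl, ← Nat.descFactorial_eq_factorial_mul_choose]
  simp only [Nat.descFactorial_succ, Nat.descFactorial_zero, Nat.add_sub_cancel, Nat.sub_zero,
    Nat.add_sub_add_right n 1 1]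
  ring

lemma succ_mul_self_mul_pred_eq_cube_sub (n : ℕ) : (n + 1) * n * (n - 1) = n ^ 3 - n := by
  rcases n with _ | n
  · rfl
  · rw [Nat.add_sub_cancel, eq_tsub_iff_add_eq_of_le (Nat.le_self_pow (by norm_num) _)]; ring

/-- If `g : ℕ → ℕ` satisfies `g 1 = g 2 = 0` and for `s ≥ 3`, `g s` is the maximum of
`g a + g b + g c + a*b*c` over positive integers `a + b + c = s`, then for `s` a power of `3`,
`g s = (1/4)·C(s+1,3) = (s+1)s(s-1)/24 = T(s)`. -/
theorem g_pow_three (g : ℕ → ℕ) (h1 : g 1 = 0) (h2 : g 2 = 0)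
    (hrec : ∀ s : ℕ, 3 ≤ s →
      IsGreatest {v : ℕ | ∃ a b c : ℕ, 0 < a ∧ 0 < b ∧ 0 < c ∧ a + b + c = s ∧
        v = g a + g b + g c + a * b * c} (g s))
    (k : ℕ) :
    g (3 ^ k) = Nat.choose (3 ^ k + 1) 3 / 4 ∧
      Nat.choose (3 ^ k + 1) 3 / 4 = (3 ^ k + 1) * 3 ^ k * (3 ^ k - 1) / 24 := by
  have hsplit := fun s hs => (hrec s hs).1
  have hsuper : ∀ a b c, 0 < a → 0 < b → 0 < c →
      g a + g b + g c + a * b * c ≤ g (a + b + c) := fun a b c ha hb hc =>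
    (hrec _ (by omega)).2 ⟨a, b, c, ha, hb, hc, rfl, rfl⟩
  have hupper :=
    twentyFour_mul_add_self_le_cube h1 h2 hsplit (3 ^ k) (Nat.one_le_pow _ _ (by norm_num))
  have hlower := cube_le_twentyFour_mul_add_self_pow_three hsuper k
  have hchoose := succ_choose_three_mul_six (3 ^ k)
  rw [succ_mul_self_mul_pred_eq_cube_sub] at hchoose ⊢
  omega
end

section
/- With d(s) = T(s) - g(s) as above, there is a constant C such that d(s) \le C s \log s for all integers s \ge 2. -/
lemma six_dvd_sq (k : ℕ) : 6 ∣ k * (k + 1) * (2 * k + 1) := by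
  induction k with
  | zero => simp
  | succ n ih =>
    have h : (n+1) * (n+1+1) * (2*(n+1)+1) = n*(n+1)*(2*n+1) + 6*((n+1)^2) := by ring
    rw [h]
    exact Nat.dvd_add ih ⟨(n+1)^2, rfl⟩

lemma six_dvd_consec (k : ℕ) : 6 ∣ k * (k + 1) * (k + 2) := by
  induction k with
  | zero => simp
  | succ n ih =>
    obtain ⟨m, hm⟩ := (Nat.even_mul_succ_self (n+1)).two_dvd
    have h : (n+1) * (n+1+1) * (n+1+2) = n*(n+1)*(n+2) + 3*((n+1)*((n+1)+1)) := by ring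
    rw [h, hm]
    exact Nat.dvd_add ih ⟨m, by ring⟩

lemma Tform_odd (k : ℕ) : 24 * Tform (2*k+1) = (2*k+2) * (2*k+1) * (2*k) := by
  have hdvd : 24 ∣ (2*k+2) * (2*k+1) * (2*k) := by
    obtain ⟨m, hm⟩ := six_dvd_sq k
    exact ⟨m, by nlinarith [hm]⟩
  have : (2*k+1) % 2 = 1 := by omega
  simp only [Tform, this, if_true]
  rw [show (2*k+1) + 1 = 2*k+2 from rfl, show (2*k+1) - 1 = 2*k by omega]
  exact Nat.mul_div_cancel' hdvd

lemma Tform_even (k : ℕ) : 24 * Tform (2*k+2) = (2*k+4) * (2*k+2) * (2*k) := by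
  have hdvd : 24 ∣ (2*k+4) * (2*k+2) * (2*k) := by
    obtain ⟨m, hm⟩ := six_dvd_consec k
    exact ⟨2*m, by nlinarith [hm]⟩
  simp only [Tform]
  rw [if_neg (by omega : ¬ (2*k+2) % 2 = 1)]
  rw [show (2*k+2) + 2 = 2*k+4 from rfl, show (2*k+2) - 2 = 2*k by omega]
  exact Nat.mul_div_cancel' hdvd

lemma T_ub (s : ℕ) (h : 1 ≤ s) : 24 * (Tform s : ℤ) ≤ (s:ℤ)^3 - s := by
  rcases Nat.even_or_odd s with he | ho
  · obtain ⟨t, rfl⟩ := he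
    have ht : 1 ≤ t := by omega
    obtain ⟨k, rfl⟩ : ∃ k, t = k + 1 := ⟨t - 1, by omega⟩
    have := Tform_even k
    have h2 : (2*k+2 : ℤ) = ((k+1)+(k+1) : ℕ) := by push_cast; ring
    have hc : (Tform (2*k+2) : ℤ) * 24 = (2*(k:ℤ)+4) * (2*k+2) * (2*k) := by
      exact_mod_cast by rw [mul_comm]; exact_mod_cast congrArg (Nat.cast : ℕ → ℤ) this
    have : ((k+1)+(k+1) : ℕ) = ((2*k+2 : ℕ)) := by ring
    rw [this]
    have hk : (0:ℤ) ≤ (k:ℤ) := by positivity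
    push_cast
    nlinarith [hc, hk]
  · obtain ⟨k, rfl⟩ := ho
    have := Tform_odd k
    have hc : (Tform (2*k+1) : ℤ) * 24 = (2*(k:ℤ)+2) * (2*k+1) * (2*k) := by
      exact_mod_cast by rw [mul_comm]; exact_mod_cast congrArg (Nat.cast : ℕ → ℤ) this
    push_cast
    nlinarith [hc]

lemma T_lb (s : ℕ) (h : 1 ≤ s) : (s:ℤ)^3 - 4*s ≤ 24 * (Tform s : ℤ) := by
  rcases Nat.even_or_odd s with he | ho
  · obtain ⟨t, rfl⟩ := he
    obtain ⟨k, rfl⟩ : ∃ k, t = k + 1 := ⟨t - 1, by omega⟩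
    have : ((k+1)+(k+1) : ℕ) = ((2*k+2 : ℕ)) := by ring
    rw [this]
    have := Tform_even k
    have hc : (Tform (2*k+2) : ℤ) * 24 = (2*(k:ℤ)+4) * (2*k+2) * (2*k) := by
      exact_mod_cast by rw [mul_comm]; exact_mod_cast congrArg (Nat.cast : ℕ → ℤ) this
    push_cast
    nlinarith [hc]
  · obtain ⟨k, rfl⟩ := ho
    have := Tform_odd k
    have hc : (Tform (2*k+1) : ℤ) * 24 = (2*(k:ℤ)+2) * (2*k+1) * (2*k) := by
      exact_mod_cast by rw [mul_comm]; exact_mod_cast congrArg (Nat.cast : ℕ → ℤ) this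
    push_cast
    nlinarith [hc, (by exact_mod_cast Nat.zero_le k : (0:ℤ) ≤ k)]

lemma T_subadd (a b c : ℕ) (ha : 1 ≤ a) (hab : a ≤ b) (hbc : b ≤ c) (hca : c ≤ a + 1) :
    (Tform (a+b+c) : ℤ) ≤ Tform a + Tform b + Tform c + a*b*c + (a+b+c) := by
  have h1 := T_ub (a+b+c) (by omega)
  have h2 := T_lb a ha
  have h3 := T_lb b (by omega)
  have h4 := T_lb c (by omega)
  have hb : b = a ∨ b = a + 1 := by omega
  have hc : c = a ∨ c = a + 1 := by omega
  have hA : (1:ℤ) ≤ (a:ℤ) := by exact_mod_cast ha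
  rcases hb with rfl | rfl <;> rcases hc with h | h <;>
    first
    | (subst h; push_cast at h1 h2 h3 h4 ⊢; nlinarith [h1, h2, h3, h4, hA])
    | omega

lemma parts (s : ℕ) (h : 3 ≤ s) :
    ∃ a b c : ℕ, 1 ≤ a ∧ a ≤ b ∧ b ≤ c ∧ c ≤ a + 1 ∧ a + b + c = s ∧ 3 * c ≤ s + 2 :=
  ⟨s/3, (s+1)/3, (s+2)/3, by omega, by omega, by omega, by omega, by omega, by omega⟩

/-- With `g` the recursive function (`g 1 = g 2 = 0`, `g s = max_{a+b+c=s} g a + g b + g c + abc`)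
and `d s = T s - g s`, there is a constant `C` with `d s ≤ C·s·log s` for all `s ≥ 2`. -/
theorem d_le_s_log_s (g : ℕ → ℕ) (h1 : g 1 = 0) (h2 : g 2 = 0)
    (hrec : ∀ s : ℕ, 3 ≤ s →
      IsGreatest {v : ℕ | ∃ a b c : ℕ, 0 < a ∧ 0 < b ∧ 0 < c ∧ a + b + c = s ∧
        v = g a + g b + g c + a * b * c} (g s))
    (d : ℕ → ℤ) (hd : ∀ s : ℕ, d s = (Tform s : ℤ) - (g s : ℤ)) :
    ∃ C : ℝ, ∀ s : ℕ, 2 ≤ s → (d s : ℝ) ≤ C * s * Real.log s := by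
  have hl95 : 0 < Real.log (9/5) := Real.log_pos (by norm_num)
  set C : ℝ := (Real.log (9/5))⁻¹ with hC
  have hCpos : 0 < C := by positivity
  have hClog : C * Real.log (9/5) = 1 := inv_mul_cancel₀ (ne_of_gt hl95)
  refine ⟨C, ?_⟩
  have key : ∀ s : ℕ, 1 ≤ s → (d s : ℝ) ≤ C * s * Real.log s := by
    intro s
    induction s using Nat.strong_induction_on with
    | _ s ih =>
      intro hs
      rcases lt_or_ge s 3 with h3 | h3
      · interval_cases s
        · simp only [hd 1, Tform, h1]; norm_num
        · rw [hd 2]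
          have hT2 : Tform 2 = 0 := by simp [Tform]
          rw [hT2, h2]
          have : (0:ℝ) ≤ C * 2 * Real.log 2 := by
            have := Real.log_nonneg (by norm_num : (1:ℝ) ≤ 2)
            positivity
          simpa using this
      · obtain ⟨a, b, c, ha, hab, hbc, hca, habc, hc3⟩ := parts s h3
        -- g recursion
        have hg : g a + g b + g c + a * b * c ≤ g s :=
          (hrec s h3).2 ⟨a, b, c, by omega, by omega, by omega, habc, rfl⟩
        have hT := T_subadd a b c ha hab hbc hca
        rw [habc] at hT
        have hds : (d s : ℝ) ≤ (d a : ℝ) + d b + d c + s := by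
          have hz : d s ≤ d a + d b + d c + (s:ℤ) := by
            rw [hd s, hd a, hd b, hd c]
            have hgz : (g a : ℤ) + g b + g c + (a:ℤ)*b*c ≤ (g s : ℤ) := by
              exact_mod_cast hg
            have hsz : ((a:ℤ)+b+c) = (s:ℤ) := by exact_mod_cast habc
            push_cast at hT ⊢
            linarith
          exact_mod_cast hz
        -- per-part bound
        have bnd : ∀ x : ℕ, 1 ≤ x → 3 * x ≤ s + 2 →
            (d x : ℝ) ≤ C * x * Real.log s - C * x * Real.log (9/5) := by
          intro x hx h9
          have hxs : x < s := by omega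
          have hih := ih x hxs hx
          have hxpos : (0:ℝ) < x := by exact_mod_cast hx
          have hlog : Real.log x ≤ Real.log s - Real.log (9/5) := by
            have hle : (x:ℝ) ≤ (5/9) * s := by
              have : (9:ℝ) * x ≤ 5 * s := by
                have : 9 * x ≤ 5 * s := by omega
                exact_mod_cast this
              linarith
            have h59 : Real.log ((5/9 : ℝ) * s) = Real.log s - Real.log (9/5) := by
              rw [Real.log_mul (by norm_num) (by positivity)]
              rw [show (5/9 : ℝ) = (9/5)⁻¹ by norm_num, Real.log_inv]
              ring
            calc Real.log x ≤ Real.log ((5/9 : ℝ) * s) :=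
                  Real.log_le_log hxpos hle
              _ = _ := h59
          calc (d x : ℝ) ≤ C * x * Real.log x := hih
            _ ≤ C * x * (Real.log s - Real.log (9/5)) := by
                apply mul_le_mul_of_nonneg_left hlog
                positivity
            _ = C * x * Real.log s - C * x * Real.log (9/5) := by ring
        have hda := bnd a ha (by omega)
        have hdb := bnd b (by omega) (by omega)
        have hdc := bnd c (by omega) hc3
        have habcR : (a:ℝ) + b + c = s := by exact_mod_cast habc
        have hslog : (s:ℝ) ≤ C * s * Real.log (9/5) := by
          have hsR : (0:ℝ) ≤ (s:ℝ) := by positivity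
          nlinarith [hClog, hsR]
        calc (d s : ℝ) ≤ (d a : ℝ) + d b + d c + s := hds
          _ ≤ (C * a * Real.log s - C * a * Real.log (9/5))
              + (C * b * Real.log s - C * b * Real.log (9/5))
              + (C * c * Real.log s - C * c * Real.log (9/5)) + s := by linarith
          _ = C * s * Real.log s - C * s * Real.log (9/5) + s := by
              rw [← habcR]; ring
          _ ≤ C * s * Real.log s := by linarith
  intro s hs
  exact key s (by omega)
end

section
/- With \delta as in the stepping-up lemma, if \epsilon_1 < \epsilon_2 < ... < \epsilon_p in {0,1}^m (ordered by binary value), then there is a unique index i in {1,...,p-1} achieving the maximum of \delta(\epsilon_i, \epsilon_{i+1}). -/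
/-!
Comparing binary values is comparing the sets of ones in the colexicographic order, so if
`bval x < bval y` then at the top coordinate `δ(x, y)` where they differ `x` has a zero and `y` a
one. Let `M` be the largest step `δ(ε_j, ε_{j+1})`. Coordinates above `M` never change along the
chain. If two steps `a < b` both reached `M`, coordinate `M` would be one at `ε_{a+1}` and zero at
`ε_b`, with all higher coordinates equal, forcing `ε_b < ε_{a+1}` against monotonicity.
-/

/-- The binary value of a 0/1 tuple: `b(ε) = ∑ γ_i 2^i` (coordinates indexed from 0). -/
def bval {m : ℕ} (ε : Fin m → Bool) : ℕ :=
  ∑ i : Fin m, if ε i then 2 ^ (i : ℕ) else 0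

/-- `δ(ε, ε')`: the largest coordinate at which `ε` and `ε'` differ (as a natural number). -/
def delta {m : ℕ} (ε ε' : Fin m → Bool) : ℕ :=
  (Finset.univ.filter (fun i : Fin m => ε i ≠ ε' i)).sup (fun i => (i : ℕ))

open Finset

theorem Fin.apply_eq_apply_of_forall_castSucc_eq_succ {α : Sort*} {n : ℕ} {f : Fin (n + 1) → α}
    (h : ∀ i : Fin n, f i.castSucc = f i.succ) (i j : Fin (n + 1)) : f i = f j := by
  have h0 : ∀ i, f i = f 0 := fun i => by
    induction i using Fin.induction with
    | zero => rfl
    | succ i ih => rw [← h i, ih]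
  rw [h0 i, h0 j]

section
variable {m : ℕ} {x y : Fin m → Bool}

lemma delta_le_iff {d : ℕ} : delta x y ≤ d ↔ ∀ k : Fin m, d < k → x k = y k := by
  simp only [delta, Finset.sup_le_iff, mem_filter, mem_univ, true_and]
  exact forall_congr' fun k => by rw [← not_imp_not, not_le, not_not]

lemma delta_comm (x y : Fin m → Bool) : delta x y = delta y x := by
  simp only [delta, ne_comm]

lemma le_delta {k : Fin m} (h : x k ≠ y k) : (k : ℕ) ≤ delta x y :=
  le_sup (f := fun i : Fin m => (i : ℕ)) (by simpa using h)

def oneIndices (x : Fin m → Bool) : Finset ℕ := (univ.filter (x · = true)).map Fin.valEmbedding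

lemma mem_oneIndices {n : ℕ} : n ∈ oneIndices x ↔ ∃ k : Fin m, x k = true ∧ (k : ℕ) = n := by
  simp [oneIndices]

lemma val_mem_oneIndices {k : Fin m} : (k : ℕ) ∈ oneIndices x ↔ x k = true := by
  simp [mem_oneIndices, Fin.val_inj]

lemma bval_eq_sum_oneIndices (x : Fin m → Bool) : bval x = ∑ k ∈ oneIndices x, 2 ^ k := by
  simp [bval, oneIndices, Finset.sum_filter]

lemma bval_lt_bval_of_delta_le (d : Fin m) (hx : x d = false) (hy : y d = true)
    (h : delta x y ≤ d) : bval x < bval y := by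
  rw [bval_eq_sum_oneIndices, bval_eq_sum_oneIndices,
    geomSum_lt_geomSum_iff_toColex_lt_toColex le_rfl, Colex.toColex_lt_toColex_iff_exists_forall_lt]
  refine ⟨d, val_mem_oneIndices.2 hy, by simp [val_mem_oneIndices, hx], ?_⟩
  rintro _ hk hky
  obtain ⟨k, hkx, rfl⟩ := mem_oneIndices.1 hk
  have hky : y k = false := by simpa [val_mem_oneIndices] using hky
  have hkd : k ≠ d := by rintro rfl; simp_all
  exact (le_delta (by simp [hkx, hky])).trans h |>.lt_of_ne (Fin.val_ne_of_ne hkd)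

lemma exists_delta_of_bval_lt (h : bval x < bval y) :
    ∃ d : Fin m, delta x y = d ∧ x d = false ∧ y d = true := by
  obtain ⟨k, hk⟩ := Function.ne_iff.1 fun hxy : x = y => h.ne (congrArg bval hxy)
  obtain ⟨d, hd, hsup⟩ := exists_mem_eq_sup (univ.filter fun i => x i ≠ y i)
    ⟨k, by simpa using hk⟩ (fun i : Fin m => (i : ℕ))
  have hxy : x d ≠ y d := (mem_filter.1 hd).2
  suffices hx : x d = false by exact ⟨d, hsup, hx, by simpa [hx] using hxy.symm⟩
  -- otherwise `y` would be the smaller of the two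
  by_contra hx
  rw [Bool.not_eq_false] at hx
  have hy : y d = false := by simpa [hx] using hxy.symm
  exact h.not_gt (bval_lt_bval_of_delta_le d hy hx ((delta_comm y x).trans hsup).le)

lemma delta_le_of_forall_delta_castSucc_succ_le {n d : ℕ} (ε : Fin (n + 1) → Fin m → Bool)
    (h : ∀ j : Fin n, delta (ε j.castSucc) (ε j.succ) ≤ d) (i j : Fin (n + 1)) :
    delta (ε i) (ε j) ≤ d :=
  delta_le_iff.2 fun k hk => Fin.apply_eq_apply_of_forall_castSucc_eq_succ
    (f := fun i => ε i k) (fun j => delta_le_iff.1 (h j) k hk) i j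

end

lemma delta_castSucc_succ_ne_of_lt {m p : ℕ} {ε : Fin (p + 1) → Fin m → Bool}
    (hmono : StrictMono fun i => bval (ε i)) {a b : Fin p} (hab : a < b)
    (hmax : ∀ j : Fin p, delta (ε j.castSucc) (ε j.succ) ≤ delta (ε a.castSucc) (ε a.succ)) :
    delta (ε b.castSucc) (ε b.succ) ≠ delta (ε a.castSucc) (ε a.succ) := by
  intro heq
  obtain ⟨d, hd, -, hup⟩ := exists_delta_of_bval_lt (hmono a.castSucc_lt_succ)
  obtain ⟨d', hd', hdown, -⟩ := exists_delta_of_bval_lt (hmono b.castSucc_lt_succ)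
  obtain rfl : d = d' := Fin.ext (by omega)
  have hagree : delta (ε b.castSucc) (ε a.succ) ≤ d :=
    delta_le_of_forall_delta_castSucc_succ_le ε (hd ▸ hmax) _ _
  exact (bval_lt_bval_of_delta_le d hdown hup hagree).not_ge
    (hmono.monotone (Fin.succ_le_castSucc_iff.2 hab))

/-- If `ε₀ < ε₁ < ⋯ < ε_p` in `{0,1}^m` (ordered by binary value, `p ≥ 1`), then there is a
unique index `i` achieving the maximum of `δ(ε_i, ε_{i+1})`. -/
theorem delta_unique_max (m p : ℕ) (hp : 0 < p) (ε : Fin (p + 1) → Fin m → Bool)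
    (hmono : ∀ i j : Fin (p + 1), i < j → bval (ε i) < bval (ε j)) :
    ∃! i : Fin p, ∀ j : Fin p,
      delta (ε j.castSucc) (ε j.succ) ≤ delta (ε i.castSucc) (ε i.succ) := by
  obtain ⟨i, -, hi⟩ := exists_max_image univ (fun j : Fin p => delta (ε j.castSucc) (ε j.succ))
    ⟨⟨0, hp⟩, mem_univ _⟩
  refine ⟨i, fun j => hi j (mem_univ j), fun j hj => ?_⟩
  have hi' : ∀ k, _ ≤ _ := fun k => hi k (mem_univ k)
  have hij := le_antisymm (hj i) (hi' j)
  rcases lt_trichotomy j i with hlt | rfl | hgt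
  · exact absurd hij (delta_castSucc_succ_ne_of_lt (fun _ _ => hmono _ _) hlt hj)
  · rfl
  · exact absurd hij.symm (delta_castSucc_succ_ne_of_lt (fun _ _ => hmono _ _) hgt hi')
end

section
/- In the vertex on-line Ramsey game, builder has a strategy which forces either a red clique K_s or a blue clique K_n using at most C(s+n-2, s-1) vertices, at most (s-2)C(s+n-2,s-1)+1 red edges, and at most (s+n-4)C(s+n-2,s-1)+1 total edges. In particular the vertex on-line Ramsey number satisfies \tilde{r}(s,n) \le (s+n-4)C(s+n-2,s-1)+1. -/
/-- A builder move in the vertex on-line Ramsey game: reveal a new vertex, or draw the edge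
from the earlier vertex `j` to the newest vertex. -/
inductive BMove where
  | reveal : BMove
  | draw : ℕ → BMove

/-- A game state: the number `nv` of revealed vertices (vertices are `0, …, nv-1`), and the
list of drawn edges together with their colors (`true` = red, `false` = blue); an edge is
recorded as `((j, i), c)` with `j < i`. -/
structure GState where
  nv : ℕ
  edges : List ((ℕ × ℕ) × Bool)

open scoped Classical in
/-- One step of the game: builder (strategy `S`, a function of the current state) either
reveals a new vertex or draws a not-yet-drawn edge from an earlier vertex `j` to the newest
vertex; painter (strategy `P`, a function of the history and the drawn edge) colors the drawn
edge immediately. Illegal moves leave the state unchanged. -/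
noncomputable def gstep (S : GState → BMove)
    (P : List ((ℕ × ℕ) × Bool) → ℕ × ℕ → Bool) (st : GState) : GState :=
  match S st with
  | BMove.reveal => ⟨st.nv + 1, st.edges⟩
  | BMove.draw j =>
      if (j + 1 < st.nv ∧ ∀ c : Bool, ((j, st.nv - 1), c) ∉ st.edges) then
        ⟨st.nv, ((j, st.nv - 1), P st.edges (j, st.nv - 1)) :: st.edges⟩
      else st

/-- The state of the game after `t` steps, starting from the empty state. -/
noncomputable def gplay (S : GState → BMove)
    (P : List ((ℕ × ℕ) × Bool) → ℕ × ℕ → Bool) : ℕ → GState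
  | 0 => ⟨0, []⟩
  | t + 1 => gstep S P (gplay S P t)

/-- The drawn edges contain a monochromatic clique of size `k` in color `col`. -/
def HasMonoClique (st : GState) (col : Bool) (k : ℕ) : Prop :=
  ∃ T : Finset ℕ, T.card = k ∧ ∀ a ∈ T, ∀ b ∈ T, a < b → ((a, b), col) ∈ st.edges

/-- The number of red edges drawn so far. -/
def redCount (st : GState) : ℕ := (st.edges.filter (fun e => e.2 = true)).length

/-- Builder strategy `S` forces, against every painter, a red `K_s` or a blue `K_n` using at
most `v` vertices, at most `r` red edges and at most `m` drawn edges in total. -/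
def BuilderWins (S : GState → BMove) (s n v r m : ℕ) : Prop :=
  ∀ P : List ((ℕ × ℕ) × Bool) → ℕ × ℕ → Bool, ∃ t : ℕ,
    (HasMonoClique (gplay S P t) true s ∨ HasMonoClique (gplay S P t) false n) ∧
    (gplay S P t).nv ≤ v ∧ redCount (gplay S P t) ≤ r ∧ (gplay S P t).edges.length ≤ m

/-- The vertex on-line Ramsey number: the minimum number of drawn edges with which builder
can force a red `K_s` or a blue `K_n` against any painter. -/
noncomputable def rTilde (s n : ℕ) : ℕ :=
  sInf {m : ℕ | ∃ S : GState → BMove, ∃ v r : ℕ, BuilderWins S s n v r m}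

/-!
Builder keeps track of the *word* of each vertex: the colors of the edges drawn to it, newest
first. While the word of the newest vertex equals the word of an older vertex `x`, builder draws
the edge from `x`; otherwise he reveals a new vertex. The older vertices then carry pairwise
distinct words with at most `s - 2` red and `n - 2` blue letters, so there are fewer than
`C(s+n-2, s-1)` of them, and builder has won as soon as the newest word has `s - 1` red or `n - 1`
blue letters. The words form a suffix-closed tree: if the word of `y` is the suffix of the word `w`
of `z` after position `j`, then `yz` is an edge of color `w[j]`. Hence the vertices carrying the
suffixes after the red (blue) letters of the newest word form, with the newest vertex, a red
(blue) clique. Summing word lengths bounds the number of red and of all edges.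
-/

def boundedWords : ℕ → ℕ → Finset (List Bool)
  | 0, 0 => {[]}
  | a + 1, 0 => insert [] ((boundedWords a 0).image (List.cons true))
  | 0, b + 1 => insert [] ((boundedWords 0 b).image (List.cons false))
  | a + 1, b + 1 => insert []
      ((boundedWords a (b + 1)).image (List.cons true) ∪
        (boundedWords (a + 1) b).image (List.cons false))

theorem mem_boundedWords {a b : ℕ} {w : List Bool} :
    w ∈ boundedWords a b ↔ w.count true ≤ a ∧ w.count false ≤ b := by
  induction w generalizing a b with
  | nil => cases a <;> cases b <;> simp [boundedWords]
  | cons c w ih => cases a <;> cases b <;> cases c <;> simp [boundedWords, ih]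

theorem card_boundedWords (a b : ℕ) :
    (boundedWords a b).card + 1 = (a + b + 2).choose (a + 1) := by
  induction a generalizing b with
  | zero =>
    induction b with
    | zero => simp [boundedWords]
    | succ b ih =>
      rw [boundedWords, Finset.card_insert_of_notMem (by simp),
        Finset.card_image_of_injective _ List.cons_injective, ih]
      simp
  | succ a iha =>
    induction b with
    | zero =>
      rw [boundedWords, Finset.card_insert_of_notMem (by simp),
        Finset.card_image_of_injective _ List.cons_injective, iha]
      simp [Nat.choose_succ_self_right]
    | succ b ihb =>
      rw [boundedWords, Finset.card_insert_of_notMem (by simp),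
        Finset.card_union_of_disjoint (by simp [Finset.disjoint_left]),
        Finset.card_image_of_injective _ List.cons_injective,
        Finset.card_image_of_injective _ List.cons_injective,
        show a + 1 + (b + 1) + 2 = (a + (b + 1) + 2) + 1 by omega, Nat.choose_succ_succ,
        ← iha, show a + (b + 1) + 2 = a + 1 + b + 2 by omega, ← ihb]
      omega

theorem exists_iterate_of_invariant {α : Type*} {f : α → α} {I W : α → Prop} {μ : α → ℕ}
    {B : ℕ} {a : α} (ha : I a) (hf : ∀ x, I x → ¬ W x → I (f x) ∧ μ x < μ (f x))
    (hB : ∀ x, I x → μ x ≤ B) : ∃ t, I (f^[t] a) ∧ W (f^[t] a) := by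
  by_contra! h
  have key : ∀ t, I (f^[t] a) ∧ t ≤ μ (f^[t] a) := by
    intro t
    induction t with
    | zero => exact ⟨ha, Nat.zero_le _⟩
    | succ t ih =>
      obtain ⟨hI, hμ⟩ := hf _ ih.1 (h t ih.1)
      rw [Function.iterate_succ_apply']
      exact ⟨hI, by omega⟩
  have := hB _ (key (B + 1)).1
  have := (key (B + 1)).2
  omega

theorem sum_range_le_mul_add_one {f : ℕ → ℕ} {N C B : ℕ} (hN : 0 < N) (hNC : N ≤ C)
    (hf : ∀ x < N - 1, f x ≤ B) (hlast : f (N - 1) ≤ B + 1) :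
    ∑ x ∈ Finset.range N, f x ≤ B * C + 1 := by
  obtain ⟨M, rfl⟩ : ∃ M, N = M + 1 := ⟨N - 1, by omega⟩
  have hsum := Finset.sum_le_card_nsmul (Finset.range M) f B
    fun x hx => hf x (by simpa using hx)
  simp only [Finset.card_range, smul_eq_mul, Nat.add_sub_cancel] at hsum hlast
  rw [Finset.sum_range_succ]
  nlinarith

theorem hasMonoClique_of_le_one (st : GState) (col : Bool) {k : ℕ} (hk : k ≤ 1) :
    HasMonoClique st col k :=
  ⟨Finset.range k, Finset.card_range k, fun a ha b hb hab => by
    simp only [Finset.mem_range] at ha hb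
    omega⟩

theorem hasMonoClique_of_chain {st : GState} {w : List Bool} {g : ℕ → ℕ}
    (hg : ∀ i j (hj : j < w.length), i ≤ j →
      g (j + 1) < g i ∧ ((g (j + 1), g i), w[j]) ∈ st.edges)
    (col : Bool) : HasMonoClique st col (w.count col + 1) := by
  classical
  have hanti : ∀ i k, i < k → k ≤ w.length → g k < g i := by
    rintro i (_ | j) hik hk
    · omega
    · exact (hg i j hk (by omega)).1
  have hinj : ∀ i ≤ w.length, ∀ k ≤ w.length, g i = g k → i = k := by
    intro i hi k hk h
    rcases lt_trichotomy i k with hik | rfl | hki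
    · exact absurd h (hanti i k hik hk).ne'
    · rfl
    · exact absurd h (hanti k i hki hi).ne
  -- the index `0` and the indices `j + 1` with `w[j] = col`
  set K := insert 0 (w.idxsOf col 1).toFinset
  have hK_le : ∀ i ∈ K, i ≤ w.length := by
    intro i hi
    rcases Finset.mem_insert.mp hi with rfl | hi
    · omega
    · have := List.lt_add_of_mem_idxsOf i (List.mem_toFinset.mp hi)
      omega
  refine ⟨K.image g, ?_, ?_⟩
  · rw [Finset.card_image_of_injOn fun i hi k hk => hinj i (hK_le i hi) k (hK_le k hk),
      Finset.card_insert_of_notMem (by simp), List.toFinset_card_of_nodup List.nodup_idxsOf,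
      List.length_idxsOf]
  · simp only [Finset.mem_image]
    rintro _ ⟨i, hi, rfl⟩ _ ⟨k, hk, rfl⟩ hlt
    have hki : k < i := by
      by_contra! hik
      rcases hik.lt_or_eq with hik | rfl
      · exact absurd hlt (hanti i k hik (hK_le k hk)).not_gt
      · exact lt_irrefl _ hlt
    rcases Finset.mem_insert.mp hi with rfl | hi
    · omega
    obtain ⟨hi1, hi2, hcol⟩ := List.mem_idxsOf_iff_getElem_sub_pos.mp (List.mem_toFinset.mp hi)
    obtain ⟨j, rfl⟩ : ∃ j, i = j + 1 := ⟨i - 1, by omega⟩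
    simp only [Nat.add_sub_cancel, beq_iff_eq] at hi2 hcol
    simpa [hcol] using (hg k j hi2 (by omega)).2

namespace GState

def inEdges (st : GState) (x : ℕ) : List ((ℕ × ℕ) × Bool) :=
  st.edges.filter (·.1.2 = x)

def word (st : GState) (x : ℕ) : List Bool :=
  (st.inEdges x).map Prod.snd

theorem length_word (st : GState) (x : ℕ) : (st.word x).length = (st.inEdges x).length :=
  List.length_map _

theorem sum_count_word_eq (st : GState) {N : ℕ} (h : ∀ e ∈ st.edges, e.1.2 < N) (c : Bool) :
    ∑ x ∈ Finset.range N, (st.word x).count c = (st.edges.filter (·.2 = c)).length := by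
  have key := Multiset.sum_count_eq_card (s := Finset.range N)
    (m := ((st.edges.filter (·.2 = c)).map (·.1.2) : Multiset ℕ))
    (by simpa using fun a b hab => h _ hab)
  simp only [Multiset.coe_count, Multiset.coe_card, List.length_map] at key
  rw [← key]
  refine Finset.sum_congr rfl fun x _ => ?_
  simp only [word, inEdges, List.count_eq_countP, List.countP_map, List.countP_filter]
  congr 1
  grind

theorem inEdges_mk_cons (st : GState) (nv : ℕ) (e : (ℕ × ℕ) × Bool) (y : ℕ) :
    (⟨nv, e :: st.edges⟩ : GState).inEdges y =
      if e.1.2 = y then e :: st.inEdges y else st.inEdges y := by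
  simp only [inEdges, List.filter_cons, decide_eq_true_eq]

theorem word_mk_edges (st : GState) (nv : ℕ) : (⟨nv, st.edges⟩ : GState).word = st.word := rfl

theorem word_mk_cons_self (st : GState) (nv a b : ℕ) (c : Bool) :
    (⟨nv, ((a, b), c) :: st.edges⟩ : GState).word b = c :: st.word b := by
  simp [word, inEdges_mk_cons]

theorem word_mk_cons_of_ne (st : GState) (nv a : ℕ) (c : Bool) {b y : ℕ} (h : y ≠ b) :
    (⟨nv, ((a, b), c) :: st.edges⟩ : GState).word y = st.word y := by
  simp only [word, inEdges_mk_cons, if_neg (Ne.symm h)]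

theorem sum_length_word_eq (st : GState) {N : ℕ} (h : ∀ e ∈ st.edges, e.1.2 < N) :
    ∑ x ∈ Finset.range N, (st.word x).length = st.edges.length := by
  simp only [← List.count_true_add_count_false, Finset.sum_add_distrib, sum_count_word_eq st h]
  simpa using (List.length_eq_length_filter_add (l := st.edges) (·.2)).symm

def size (st : GState) : ℕ := st.nv + st.edges.length

end GState

open scoped Classical in
noncomputable def wordStrategy (st : GState) : BMove :=
  if h : ∃ x < st.nv - 1, st.word x = st.word (st.nv - 1) then .draw h.choose else .reveal

theorem gplay_add_one_eq_iterate (S : GState → BMove)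
    (P : List ((ℕ × ℕ) × Bool) → ℕ × ℕ → Bool) (t : ℕ) :
    gplay S P (t + 1) = (gstep S P)^[t] (gplay S P 1) := by
  induction t with
  | zero => rfl
  | succ t ih => rw [Function.iterate_succ_apply', ← ih]; rfl

theorem gplay_one_wordStrategy (P : List ((ℕ × ℕ) × Bool) → ℕ × ℕ → Bool) :
    gplay wordStrategy P 1 = ⟨1, []⟩ := by
  simp [gplay, gstep, wordStrategy]

namespace GState

variable {s n : ℕ} {st : GState}

def Won (s n : ℕ) (st : GState) : Prop :=
  (st.word (st.nv - 1)).count true = s - 1 ∨ (st.word (st.nv - 1)).count false = n - 1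

/-- Vertices `x < nv - 1` are *old*, `nv - 1` is the newest. By the last field, the `i`-th most
recent edge into `x` comes from the old vertex whose word was the word of `x` when that edge was
drawn. -/
structure Invariant (s n : ℕ) (st : GState) : Prop where
  nv_pos : 0 < st.nv
  lt_nv : ∀ e ∈ st.edges, e.1.2 < st.nv
  count_old : ∀ x < st.nv - 1,
    (st.word x).count true ≤ s - 2 ∧ (st.word x).count false ≤ n - 2
  injOn_word : Set.InjOn st.word (Set.Iio (st.nv - 1))
  count_newest : (st.word (st.nv - 1)).count true ≤ s - 1 ∧
    (st.word (st.nv - 1)).count false ≤ n - 1 ∧ (st.word (st.nv - 1)).length + 3 ≤ s + n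
  inEdges_getElem? : ∀ x i e, (st.inEdges x)[i]? = some e →
    e.1.1 < st.nv - 1 ∧ e.1.1 < x ∧ st.word e.1.1 = (st.word x).drop (i + 1)

namespace Invariant

theorem start (h : 3 ≤ s + n) : (⟨1, []⟩ : GState).Invariant s n where
  nv_pos := one_pos
  lt_nv := by simp
  count_old := by simp
  injOn_word := by simp
  count_newest := ⟨Nat.zero_le _, Nat.zero_le _, h⟩
  inEdges_getElem? := by simp [inEdges]

theorem count_newest_of_not_won (inv : st.Invariant s n) (hw : ¬ st.Won s n) :
    (st.word (st.nv - 1)).count true + 1 ≤ s - 1 ∧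
      (st.word (st.nv - 1)).count false + 1 ≤ n - 1 := by
  unfold Won at hw
  have := inv.count_newest
  omega

theorem word_newest_eq_nil (inv : st.Invariant s n) : st.word st.nv = [] := by
  simp only [word, inEdges, List.map_eq_nil_iff, List.filter_eq_nil_iff, decide_eq_true_eq]
  exact fun e he => (inv.lt_nv e he).ne

theorem reveal (inv : st.Invariant s n) (h : 3 ≤ s + n) (hw : ¬ st.Won s n)
    (hfresh : ∀ x < st.nv - 1, st.word x ≠ st.word (st.nv - 1)) :
    (⟨st.nv + 1, st.edges⟩ : GState).Invariant s n where
  nv_pos := Nat.succ_pos _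
  lt_nv e he := Nat.lt_succ_of_lt (inv.lt_nv e he)
  count_old x hx := by
    simp only [word_mk_edges, Nat.add_sub_cancel] at hx ⊢
    rcases Nat.lt_or_ge x (st.nv - 1) with hx' | hx'
    · exact inv.count_old x hx'
    · obtain rfl : x = st.nv - 1 := by omega
      have := inv.count_newest_of_not_won hw
      omega
  injOn_word x hx y hy hxy := by
    simp only [Set.mem_Iio, Nat.add_sub_cancel, word_mk_edges] at hx hy hxy
    rcases Nat.lt_or_ge x (st.nv - 1) with hx' | hx' <;>
      rcases Nat.lt_or_ge y (st.nv - 1) with hy' | hy'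
    · exact inv.injOn_word hx' hy' hxy
    · obtain rfl : y = st.nv - 1 := by omega
      exact absurd hxy (hfresh x hx')
    · obtain rfl : x = st.nv - 1 := by omega
      exact absurd hxy.symm (hfresh y hy')
    · omega
  count_newest := by
    have hnil : (⟨st.nv + 1, st.edges⟩ : GState).word (st.nv + 1 - 1) = [] := by
      rw [Nat.add_sub_cancel]
      exact inv.word_newest_eq_nil
    simp only [hnil, List.count_nil, List.length_nil]
    omega
  inEdges_getElem? x i e he := by
    obtain ⟨h1, h2, h3⟩ := inv.inEdges_getElem? x i e he
    exact ⟨by simp only [Nat.add_sub_cancel]; omega, h2, h3⟩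

theorem not_mem_edges (inv : st.Invariant s n) {x : ℕ}
    (hxw : st.word x = st.word (st.nv - 1)) (c : Bool) : ((x, st.nv - 1), c) ∉ st.edges := by
  intro hmem
  have hmem' : ((x, st.nv - 1), c) ∈ st.inEdges (st.nv - 1) :=
    List.mem_filter.mpr ⟨hmem, by simp⟩
  obtain ⟨i, hi, hget⟩ := List.getElem_of_mem hmem'
  have hdrop := (inv.inEdges_getElem? _ i _ (by rw [List.getElem?_eq_getElem hi, hget])).2.2
  have hlen := congrArg List.length (hxw.symm.trans hdrop)
  rw [List.length_drop, length_word] at hlen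
  omega

theorem draw (inv : st.Invariant s n) (hw : ¬ st.Won s n) {x : ℕ} (hx : x < st.nv - 1)
    (hxw : st.word x = st.word (st.nv - 1)) (c : Bool) :
    (⟨st.nv, ((x, st.nv - 1), c) :: st.edges⟩ : GState).Invariant s n where
  nv_pos := inv.nv_pos
  lt_nv e he := by
    rcases List.mem_cons.mp he with rfl | he
    · dsimp only; omega
    · exact inv.lt_nv e he
  count_old y hy := by
    rw [word_mk_cons_of_ne _ _ _ _ (by dsimp only at hy; omega)]
    exact inv.count_old y hy
  injOn_word y hy z hz hyz := by
    simp only [Set.mem_Iio] at hy hz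
    rw [word_mk_cons_of_ne _ _ _ _ (by omega), word_mk_cons_of_ne _ _ _ _ (by omega)] at hyz
    exact inv.injOn_word hy hz hyz
  count_newest := by
    rw [word_mk_cons_self]
    have := inv.count_newest_of_not_won hw
    have := (st.word (st.nv - 1)).count_true_add_count_false
    cases c <;> simp only [List.count_cons, List.length_cons, BEq.rfl, beq_true, beq_false,
      Bool.not_true, Bool.false_eq_true, ↓reduceIte, add_zero] <;> omega
  inEdges_getElem? y i e he := by
    rw [inEdges_mk_cons] at he
    by_cases hy : y = st.nv - 1
    · subst hy
      rw [if_pos rfl] at he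
      rw [word_mk_cons_self]
      cases i with
      | zero =>
        obtain rfl := Option.some.inj he
        exact ⟨hx, hx, by rw [word_mk_cons_of_ne _ _ _ _ hx.ne, hxw]; rfl⟩
      | succ i =>
        obtain ⟨h1, h2, h3⟩ := inv.inEdges_getElem? _ i e he
        exact ⟨h1, h2, by rw [word_mk_cons_of_ne _ _ _ _ (by omega), h3]; rfl⟩
    · rw [if_neg (Ne.symm hy)] at he
      obtain ⟨h1, h2, h3⟩ := inv.inEdges_getElem? y i e he
      rw [word_mk_cons_of_ne _ _ _ _ hy, word_mk_cons_of_ne _ _ _ _ (by omega)]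
      exact ⟨h1, h2, h3⟩

theorem step (inv : st.Invariant s n) (h : 3 ≤ s + n) (hw : ¬ st.Won s n)
    (P : List ((ℕ × ℕ) × Bool) → ℕ × ℕ → Bool) :
    (gstep wordStrategy P st).Invariant s n ∧ st.size < (gstep wordStrategy P st).size := by
  by_cases hx : ∃ x < st.nv - 1, st.word x = st.word (st.nv - 1)
  · obtain ⟨hlt, hxw⟩ := hx.choose_spec
    have hlegal : hx.choose + 1 < st.nv ∧ ∀ c, ((hx.choose, st.nv - 1), c) ∉ st.edges :=
      ⟨by omega, inv.not_mem_edges hxw⟩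
    simp only [_root_.gstep, wordStrategy, dif_pos hx, if_pos hlegal]
    exact ⟨inv.draw hw hlt hxw _, by simp [size]⟩
  · simp only [_root_.gstep, wordStrategy, dif_neg hx]
    exact ⟨inv.reveal h hw fun x hlt hxw => hx ⟨x, hlt, hxw⟩, by simp [size]⟩

theorem exists_word_eq_drop (inv : st.Invariant s n) {x j : ℕ} (hj : j < (st.word x).length) :
    ∃ a < st.nv - 1, st.word a = (st.word x).drop (j + 1) := by
  rw [length_word] at hj
  obtain ⟨h1, -, h3⟩ := inv.inEdges_getElem? x j _ (List.getElem?_eq_getElem hj)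
  exact ⟨_, h1, h3⟩

theorem edge_of_word_eq_drop (inv : st.Invariant s n) {x a j : ℕ}
    (hj : j < (st.word x).length) (ha : a < st.nv - 1)
    (hwa : st.word a = (st.word x).drop (j + 1)) :
    a < x ∧ ((a, x), (st.word x)[j]) ∈ st.edges := by
  have hj' : j < (st.inEdges x).length := by rwa [← length_word]
  set e := (st.inEdges x)[j]
  obtain ⟨he1, he2, he3⟩ := inv.inEdges_getElem? x j e (List.getElem?_eq_getElem hj')
  obtain rfl : a = e.1.1 := inv.injOn_word ha he1 (hwa.trans he3.symm)
  obtain ⟨hmem, hx⟩ : e ∈ st.edges ∧ e.1.2 = x := by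
    simpa using List.mem_filter.mp (List.getElem_mem hj')
  have hcol : (st.word x)[j] = e.2 := by simp [word, e]
  refine ⟨he2, ?_⟩
  rw [hcol, ← hx]
  exact hmem

theorem hasMonoClique (inv : st.Invariant s n) (col : Bool) :
    HasMonoClique st col ((st.word (st.nv - 1)).count col + 1) := by
  set w := st.word (st.nv - 1)
  choose! f hf_lt hf_word using fun j (hj : j < w.length) => inv.exists_word_eq_drop hj
  let g : ℕ → ℕ := fun k => Nat.casesOn k (st.nv - 1) f
  have hg_word : ∀ i ≤ w.length, st.word (g i) = w.drop i
    | 0, _ => rfl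
    | i + 1, hi => hf_word i (by omega)
  refine hasMonoClique_of_chain (g := g) (fun i j hj hij => ?_) col
  have := inv.edge_of_word_eq_drop (x := g i) (j := j - i) (a := f j)
    (by rw [hg_word i (by omega), List.length_drop]; omega) (hf_lt j hj)
    (by rw [hf_word j hj, hg_word i (by omega), List.drop_drop]; congr 1; omega)
  simpa [hg_word i (by omega), show i + (j - i) = j by omega] using this

theorem nv_le (inv : st.Invariant s n) (hs : 2 ≤ s) (hn : 2 ≤ n) :
    st.nv ≤ (s + n - 2).choose (s - 1) := by
  have hcard := card_boundedWords (s - 2) (n - 2)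
  rw [show s - 2 + (n - 2) + 2 = s + n - 2 by omega, show s - 2 + 1 = s - 1 by omega] at hcard
  have hold := Finset.card_le_card_of_injOn st.word (s := Finset.range (st.nv - 1))
    (t := boundedWords (s - 2) (n - 2))
    (fun x hx => mem_boundedWords.mpr (inv.count_old x (by simpa using hx)))
    (by simpa using inv.injOn_word)
  rw [Finset.card_range] at hold
  omega

theorem redCount_le (inv : st.Invariant s n) (hs : 2 ≤ s) (hn : 2 ≤ n) :
    redCount st ≤ (s - 2) * (s + n - 2).choose (s - 1) + 1 := by
  rw [redCount, ← st.sum_count_word_eq inv.lt_nv true]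
  refine sum_range_le_mul_add_one inv.nv_pos (inv.nv_le hs hn)
    (fun x hx => (inv.count_old x hx).1) ?_
  have := inv.count_newest.1
  omega

theorem length_edges_le (inv : st.Invariant s n) (hs : 2 ≤ s) (hn : 2 ≤ n) :
    st.edges.length ≤ (s + n - 4) * (s + n - 2).choose (s - 1) + 1 := by
  rw [← st.sum_length_word_eq inv.lt_nv]
  refine sum_range_le_mul_add_one inv.nv_pos (inv.nv_le hs hn) (fun x hx => ?_) ?_
  · have := inv.count_old x hx
    have := (st.word x).count_true_add_count_false
    omega
  · have := inv.count_newest.2.2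
    omega

end Invariant

end GState

theorem builderWins_wordStrategy {s n : ℕ} (hs : 2 ≤ s) (hn : 2 ≤ n) :
    BuilderWins wordStrategy s n ((s + n - 2).choose (s - 1))
      ((s - 2) * (s + n - 2).choose (s - 1) + 1)
      ((s + n - 4) * (s + n - 2).choose (s - 1) + 1) := by
  intro P
  obtain ⟨t, hinv, hwon⟩ := exists_iterate_of_invariant (f := gstep wordStrategy P)
    (I := GState.Invariant s n) (W := GState.Won s n) (μ := GState.size)
    (a := gplay wordStrategy P 1)
    (by rw [gplay_one_wordStrategy]; exact GState.Invariant.start (by omega))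
    (fun st inv hw => inv.step (by omega) hw P)
    (fun st inv => add_le_add (inv.nv_le hs hn) (inv.length_edges_le hs hn))
  rw [← gplay_add_one_eq_iterate] at hinv hwon
  refine ⟨t + 1, ?_, hinv.nv_le hs hn, hinv.redCount_le hs hn, hinv.length_edges_le hs hn⟩
  rcases hwon with hred | hblue
  · left
    simpa [hred, Nat.sub_add_cancel (by omega : 1 ≤ s)] using hinv.hasMonoClique true
  · right
    simpa [hblue, Nat.sub_add_cancel (by omega : 1 ≤ n)] using hinv.hasMonoClique false

theorem builderWins_of_le_one {s n : ℕ} (h : s ≤ 1 ∨ n ≤ 1) (v r m : ℕ) :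
    BuilderWins (fun _ => .reveal) s n v r m := fun _ =>
  ⟨0, h.imp (hasMonoClique_of_le_one _ _) (hasMonoClique_of_le_one _ _),
    Nat.zero_le _, Nat.zero_le _, Nat.zero_le _⟩

theorem exists_builderWins (s n : ℕ) :
    ∃ S : GState → BMove, BuilderWins S s n ((s + n - 2).choose (s - 1))
      ((s - 2) * (s + n - 2).choose (s - 1) + 1)
      ((s + n - 4) * (s + n - 2).choose (s - 1) + 1) := by
  by_cases h : 2 ≤ s ∧ 2 ≤ n
  · exact ⟨wordStrategy, builderWins_wordStrategy h.1 h.2⟩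
  · exact ⟨_, builderWins_of_le_one (by omega) _ _ _⟩

theorem rTilde_le_of_builderWins {S : GState → BMove} {s n v r m : ℕ}
    (h : BuilderWins S s n v r m) : rTilde s n ≤ m :=
  Nat.sInf_le ⟨S, v, r, h⟩

/-- In the vertex on-line Ramsey game, builder has a strategy forcing a red `K_s` or a blue
`K_n` using at most `C(s+n-2, s-1)` vertices, `(s-2)·C(s+n-2,s-1)+1` red edges and
`(s+n-4)·C(s+n-2,s-1)+1` edges in total; in particular
`r̃(s,n) ≤ (s+n-4)·C(s+n-2,s-1)+1`. -/
theorem builder_strategy (s n : ℕ) :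
    (∃ S : GState → BMove, BuilderWins S s n (Nat.choose (s + n - 2) (s - 1))
      ((s - 2) * Nat.choose (s + n - 2) (s - 1) + 1)
      ((s + n - 4) * Nat.choose (s + n - 2) (s - 1) + 1)) ∧
    rTilde s n ≤ (s + n - 4) * Nat.choose (s + n - 2) (s - 1) + 1 := by
  obtain ⟨S, hS⟩ := exists_builderWins s n
  exact ⟨⟨S, hS⟩, rTilde_le_of_builderWins hS⟩
end

section
/- r_3(n,n,n) > 2^{r(\lfloor \log_2 n \rfloor, n-1) - 1}, where r_3(n,n,n) is the 3-color Ramsey number for triples and r(a,b) is the graph Ramsey number. -/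
/-- `N` is Ramsey for the 3-color diagonal 3-uniform problem: every 3-coloring of the triples
of `{0, …, N-1}` contains a monochromatic set of size `n`. -/
def HasRamsey3Color (N n : ℕ) : Prop :=
  ∀ C : Finset ℕ → Fin 3, ∃ T : Finset ℕ, T ⊆ Finset.range N ∧ T.card = n ∧
    ∃ c : Fin 3, ∀ e ⊆ T, e.card = 3 → C e = c

/-- The 3-color Ramsey number `r₃(n,n,n)` for triples. -/
noncomputable def r3three (n : ℕ) : ℕ := sInf {N : ℕ | HasRamsey3Color N n}

/-- `N` is Ramsey for `(a, b)` for graphs: every red-blue coloring of the edges of the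
complete graph on `{0, …, N-1}` (given by the colors `C x y` for `x < y`; `true` = red)
contains a red clique of size `a` or a blue clique of size `b`. -/
def HasRamsey2 (N a b : ℕ) : Prop :=
  ∀ C : ℕ → ℕ → Bool, ∃ T : Finset ℕ, T ⊆ Finset.range N ∧
    ((T.card = a ∧ ∀ x ∈ T, ∀ y ∈ T, x < y → C x y = true) ∨
     (T.card = b ∧ ∀ x ∈ T, ∀ y ∈ T, x < y → C x y = false))

/-- The graph Ramsey number `r(a,b)`. -/
noncomputable def r2 (a b : ℕ) : ℕ := sInf {N : ℕ | HasRamsey2 N a b}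

/-!
Stepping up. Let `χ` colour the pairs of `{0, …, m-1}` with no red clique of size `⌊log₂ n⌋` and
no blue clique of size `n - 1`, and read the points of `{0, …, 2^m - 1}` as 0/1-vectors of length
`m`. For `x < y` let `δ(x,y)` be the largest coordinate where `x` and `y` differ; for `x < y < z`
the values `δ(x,y)` and `δ(y,z)` are distinct and `δ(x,z)` is their maximum. Colour `x < y < z`
by `2` if `χ` is red on `{δ(x,y), δ(y,z)}`, and otherwise by `0` or `1` according as `δ` increases
or decreases along the triple. On an `n`-set `T` monochromatic in colour `0` (resp. `1`) the values
`δ(min T, x)` (resp. `δ(x, max T)`) are strictly monotone and pairwise blue. On a set `S`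
monochromatic in colour `2`, splitting `S` at the coordinate `M = δ(min S, max S)` gives two blocks,
all of whose inner `δ`'s are below `M` and red with `M`; recursing into the larger block gives a red
clique of size `⌊log₂ |S|⌋`.

Since `r3three` is an infimum (`0` for an empty set), the bound also needs the existence of
`r₃(n,n,n)`: this is Ramsey's theorem for hypergraphs, proved by induction on the uniformity through
Erdős–Rado end-homogeneous sets.
-/

open Finset

def IsMonoClique (χ : ℕ → ℕ → Bool) (c : Bool) (R : Finset ℕ) : Prop :=
  ∀ x ∈ R, ∀ y ∈ R, x < y → χ x y = c

lemma IsMonoClique.insert {χ : ℕ → ℕ → Bool} {c : Bool} {R : Finset ℕ} {M : ℕ}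
    (hR : IsMonoClique χ c R) (hlt : ∀ r ∈ R, r < M) (hM : ∀ r ∈ R, χ r M = c) :
    IsMonoClique χ c (insert M R) := by
  intro x hx y hy hxy
  rcases mem_insert.mp hx with rfl | hxR <;> rcases mem_insert.mp hy with rfl | hyR
  · exact absurd hxy (lt_irrefl _)
  · exact absurd (hlt y hyR) (not_lt.mpr hxy.le)
  · exact hM x hxR
  · exact hR x hxR y hyR hxy

section SteppingUp

variable {α : Type*} [LinearOrder α]

structure IsSteppingUpDelta (δ : α → α → ℕ) : Prop where
  max_eq : ∀ ⦃x y z⦄, x < y → y < z → δ x z = max (δ x y) (δ y z)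
  ne : ∀ ⦃x y z⦄, x < y → y < z → δ x y ≠ δ y z

lemma exists_isMonoClique_insert {δ : α → α → ℕ} {χ : ℕ → ℕ → Bool} {c : Bool}
    {S P : Finset α} {R : Finset ℕ} {l u : α} (hPS : P ⊆ S) (hl : l ∈ S) (hu : u ∈ S)
    (hlu : l < u) (hRval : ∀ r ∈ R, ∃ x ∈ P, ∃ y ∈ P, x < y ∧ δ x y = r)
    (hR : IsMonoClique χ c R)
    (hP : ∀ x ∈ P, ∀ y ∈ P, x < y → δ x y < δ l u ∧ χ (δ x y) (δ l u) = c) :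
    ∃ R' : Finset ℕ, #R' = #R + 1 ∧ (∀ r ∈ R', ∃ x ∈ S, ∃ y ∈ S, x < y ∧ δ x y = r) ∧
      IsMonoClique χ c R' := by
  have hRM : ∀ r ∈ R, r < δ l u ∧ χ r (δ l u) = c := by
    intro r hr
    obtain ⟨x, hx, y, hy, hxy, rfl⟩ := hRval r hr
    exact hP x hx y hy hxy
  refine ⟨insert (δ l u) R, card_insert_of_notMem fun h => lt_irrefl _ (hRM _ h).1, ?_,
    hR.insert (fun r hr => (hRM r hr).1) (fun r hr => (hRM r hr).2)⟩
  intro r hr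
  rcases mem_insert.mp hr with rfl | hr
  · exact ⟨l, hl, u, hu, hlu, rfl⟩
  · obtain ⟨x, hx, y, hy, hxy, rfl⟩ := hRval r hr
    exact ⟨x, hPS hx, y, hPS hy, hxy, rfl⟩

namespace IsSteppingUpDelta

variable {δ : α → α → ℕ} (hδ : IsSteppingUpDelta δ) {x y z : α}
include hδ

lemma le_of_le_left {x' : α} (hx : x' ≤ x) (hxy : x < y) : δ x y ≤ δ x' y := by
  rcases hx.lt_or_eq with hx | rfl
  · exact (hδ.max_eq hx hxy).symm ▸ le_max_right _ _
  · rfl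

lemma le_of_le_right {y' : α} (hxy : x < y) (hy : y ≤ y') : δ x y ≤ δ x y' := by
  rcases hy.lt_or_eq with hy | rfl
  · exact (hδ.max_eq hxy hy).symm ▸ le_max_left _ _
  · rfl

lemma eq_right_of_lt (hxy : x < y) (hyz : y < z) (h : δ x y < δ x z) : δ y z = δ x z := by
  have := hδ.max_eq hxy hyz
  omega

lemma lt_of_eq_left (hxy : x < y) (hyz : y < z) (h : δ x y = δ x z) : δ y z < δ x z := by
  have := hδ.max_eq hxy hyz
  have := hδ.ne hxy hyz
  omega

lemma lt_of_delta_lt (hx : z < x) (hy : z < y) (h : δ z x < δ z y) : x < y := by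
  by_contra! hyx
  rcases hyx.lt_or_eq with hyx | rfl
  · have := hδ.le_of_le_right hy hyx.le
    omega
  · exact lt_irrefl _ h

variable {χ : ℕ → ℕ → Bool}

lemma exists_isMonoClique_of_increasing {T : Finset α} (hT : T.Nonempty)
    (h : ∀ x ∈ T, ∀ y ∈ T, ∀ z ∈ T, x < y → y < z → δ x y < δ y z ∧ χ (δ x y) (δ y z) = false) :
    ∃ R : Finset ℕ, #R = #T - 1 ∧ (∀ r ∈ R, ∃ x ∈ T, ∃ y ∈ T, x < y ∧ δ x y = r) ∧
      IsMonoClique χ false R := by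
  set lo := T.min' hT
  have hlo : ∀ x ∈ T.erase lo, lo < x := fun x hx => T.min'_lt_of_mem_erase_min' hT hx
  have hstep : ∀ x ∈ T.erase lo, ∀ y ∈ T.erase lo, x < y →
      δ lo x < δ lo y ∧ δ lo y = δ x y ∧ χ (δ lo x) (δ x y) = false := by
    intro x hx y hy hxy
    have ⟨hlt, hχ⟩ := h lo (T.min'_mem hT) x (mem_of_mem_erase hx) y (mem_of_mem_erase hy)
      (hlo x hx) hxy
    have hmax : δ lo y = δ x y := by rw [hδ.max_eq (hlo x hx) hxy, max_eq_right hlt.le]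
    exact ⟨hmax ▸ hlt, hmax, hχ⟩
  have hmono : StrictMonoOn (δ lo) (T.erase lo) := fun x hx y hy hxy => (hstep x hx y hy hxy).1
  refine ⟨(T.erase lo).image (δ lo), ?_, ?_, ?_⟩
  · rw [card_image_of_injOn hmono.injOn, card_erase_of_mem (T.min'_mem hT)]
  · intro r hr
    obtain ⟨x, hx, rfl⟩ := mem_image.mp hr
    exact ⟨lo, T.min'_mem hT, x, mem_of_mem_erase hx, hlo x hx, rfl⟩
  · intro _ hr _ hs hrs
    obtain ⟨x, hx, rfl⟩ := mem_image.mp hr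
    obtain ⟨y, hy, rfl⟩ := mem_image.mp hs
    have hxy := (hmono.lt_iff_lt hx hy).mp hrs
    rw [(hstep x hx y hy hxy).2.1]
    exact (hstep x hx y hy hxy).2.2

lemma exists_isMonoClique_of_decreasing {T : Finset α} (hT : T.Nonempty)
    (h : ∀ x ∈ T, ∀ y ∈ T, ∀ z ∈ T, x < y → y < z → δ y z < δ x y ∧ χ (δ y z) (δ x y) = false) :
    ∃ R : Finset ℕ, #R = #T - 1 ∧ (∀ r ∈ R, ∃ x ∈ T, ∃ y ∈ T, x < y ∧ δ x y = r) ∧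
      IsMonoClique χ false R := by
  set hi := T.max' hT
  have hhi : ∀ x ∈ T.erase hi, x < hi := fun x hx => T.lt_max'_of_mem_erase_max' hT hx
  have hstep : ∀ x ∈ T.erase hi, ∀ y ∈ T.erase hi, x < y →
      δ y hi < δ x hi ∧ δ x hi = δ x y ∧ χ (δ y hi) (δ x y) = false := by
    intro x hx y hy hxy
    have ⟨hlt, hχ⟩ := h x (mem_of_mem_erase hx) y (mem_of_mem_erase hy) hi (T.max'_mem hT)
      hxy (hhi y hy)
    have hmax : δ x hi = δ x y := by rw [hδ.max_eq hxy (hhi y hy), max_eq_left hlt.le]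
    exact ⟨hmax ▸ hlt, hmax, hχ⟩
  have hanti : StrictAntiOn (δ · hi) (T.erase hi) := fun x hx y hy hxy =>
    (hstep x hx y hy hxy).1
  refine ⟨(T.erase hi).image (δ · hi), ?_, ?_, ?_⟩
  · rw [card_image_of_injOn hanti.injOn, card_erase_of_mem (T.max'_mem hT)]
  · intro r hr
    obtain ⟨x, hx, rfl⟩ := mem_image.mp hr
    exact ⟨x, mem_of_mem_erase hx, hi, T.max'_mem hT, hhi x hx, rfl⟩
  · intro _ hr _ hs hrs
    obtain ⟨y, hy, rfl⟩ := mem_image.mp hr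
    obtain ⟨x, hx, rfl⟩ := mem_image.mp hs
    have hxy := (hanti.lt_iff_gt hy hx).mp hrs
    rw [(hstep x hx y hy hxy).2.1]
    exact (hstep x hx y hy hxy).2.2

-- `L` and `U` are the points of `S` whose coordinate `δ l u` is `0`, resp. `1`.
lemma exists_split {S : Finset α} (hS : 1 < #S) :
    ∃ (L U : Finset α) (l u : α), L ⊆ S ∧ U ⊆ S ∧ #L + #U = #S ∧ l ∈ L ∧ u ∈ U ∧
      (∀ x ∈ L, ∀ y ∈ L, x < y → δ x y < δ l u) ∧ (∀ x ∈ U, ∀ y ∈ U, x < y → δ x y < δ l u) ∧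
      ∀ x ∈ L, ∀ y ∈ U, x < y ∧ δ x y = δ l u := by
  have hne : S.Nonempty := card_pos.mp (by omega)
  set lo := S.min' hne
  set hi := S.max' hne
  have hlohi : lo < hi := S.min'_lt_max'_of_card hS
  have hUmem : ∀ y ∈ S.filter (fun x => ¬(x = lo ∨ δ lo x < δ lo hi)),
      y ∈ S ∧ lo < y ∧ δ lo y = δ lo hi := by
    intro y hy
    obtain ⟨hyS, hy⟩ := mem_filter.mp hy
    simp only [not_or, not_lt] at hy
    have hloy : lo < y := lt_of_le_of_ne (S.min'_le y hyS) (Ne.symm hy.1)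
    exact ⟨hyS, hloy, le_antisymm (hδ.le_of_le_right hloy (S.le_max' y hyS)) hy.2⟩
  have hhiU : hi ∈ S.filter (fun x => ¬(x = lo ∨ δ lo x < δ lo hi)) :=
    mem_filter.mpr ⟨S.max'_mem hne, by simp [hlohi.ne']⟩
  refine ⟨S.filter (fun x => x = lo ∨ δ lo x < δ lo hi),
    S.filter (fun x => ¬(x = lo ∨ δ lo x < δ lo hi)), lo, hi, filter_subset _ _,
    filter_subset _ _, card_filter_add_card_filter_not _,
    mem_filter.mpr ⟨S.min'_mem hne, Or.inl rfl⟩, hhiU, ?_, ?_, ?_⟩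
  · intro x hx y hy hxy
    have hlox : lo ≤ x := S.min'_le x (mem_filter.mp hx).1
    have hyM : δ lo y < δ lo hi := (mem_filter.mp hy).2.resolve_left (hlox.trans_lt hxy).ne'
    exact (hδ.le_of_le_left hlox hxy).trans_lt hyM
  · intro x hx y hy hxy
    obtain ⟨-, hlox, hxM⟩ := hUmem x hx
    obtain ⟨-, -, hyM⟩ := hUmem y hy
    exact hyM ▸ hδ.lt_of_eq_left hlox hxy (hxM.trans hyM.symm)
  · intro x hx y hy
    obtain ⟨-, hloy, hyM⟩ := hUmem y hy
    obtain ⟨hxS, hx⟩ := mem_filter.mp hx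
    rcases eq_or_ne x lo with rfl | hxlo
    · exact ⟨hloy, hyM⟩
    · have hxM := hx.resolve_left hxlo
      have hlox : lo < x := lt_of_le_of_ne (S.min'_le x hxS) hxlo.symm
      have hxy : x < y := hδ.lt_of_delta_lt hlox hloy (hyM ▸ hxM)
      exact ⟨hxy, hyM ▸ hδ.eq_right_of_lt hlox hxy (hyM ▸ hxM)⟩

lemma exists_isMonoClique_of_red (s : ℕ) : ∀ S : Finset α, 2 ^ s ≤ #S →
    (∀ x ∈ S, ∀ y ∈ S, ∀ z ∈ S, x < y → y < z →
      χ (min (δ x y) (δ y z)) (max (δ x y) (δ y z)) = true) →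
    ∃ R : Finset ℕ, #R = s ∧ (∀ r ∈ R, ∃ x ∈ S, ∃ y ∈ S, x < y ∧ δ x y = r) ∧
      IsMonoClique χ true R := by
  induction s with
  | zero => exact fun _ _ _ => ⟨∅, rfl, by simp, by simp [IsMonoClique]⟩
  | succ s ih =>
    intro S hS hred
    obtain ⟨L, U, l, u, hLS, hUS, hcard, hl, hu, hL, hU, hLU⟩ :=
      hδ.exists_split (lt_of_lt_of_le (Nat.one_lt_two_pow (by omega)) hS)
    rcases le_or_gt (2 ^ s) #L with hLs | hLs
    · obtain ⟨R, rfl, hRval, hR⟩ :=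
        ih L hLs fun x hx y hy z hz => hred x (hLS hx) y (hLS hy) z (hLS hz)
      refine exists_isMonoClique_insert hLS (hLS hl) (hUS hu) (hLU l hl u hu).1 hRval hR
        fun x hx y hy hxy => ?_
      have hxyM := hL x hx y hy hxy
      have := hred x (hLS hx) y (hLS hy) u (hUS hu) hxy (hLU y hy u hu).1
      rw [(hLU y hy u hu).2, min_eq_left hxyM.le, max_eq_right hxyM.le] at this
      exact ⟨hxyM, this⟩
    · obtain ⟨R, rfl, hRval, hR⟩ := ih U (by rw [pow_succ] at hS; omega)
        fun x hx y hy z hz => hred x (hUS hx) y (hUS hy) z (hUS hz)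
      refine exists_isMonoClique_insert hUS (hLS hl) (hUS hu) (hLU l hl u hu).1 hRval hR
        fun x hx y hy hxy => ?_
      have hxyM := hU x hx y hy hxy
      have := hred l (hLS hl) x (hUS hx) y (hUS hy) (hLU l hl x hx).1 hxy
      rw [(hLU l hl x hx).2, min_eq_right hxyM.le, max_eq_left hxyM.le] at this
      exact ⟨hxyM, this⟩

end IsSteppingUpDelta

def stepUpColor (χ : ℕ → ℕ → Bool) (d₁ d₂ : ℕ) : Fin 3 :=
  if χ (min d₁ d₂) (max d₁ d₂) then 2 else if d₁ < d₂ then 0 else 1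

def stepUpColoring (δ : α → α → ℕ) (χ : ℕ → ℕ → Bool) (e : Finset α) : Fin 3 :=
  match e.sort (· ≤ ·) with
  | [x, y, z] => stepUpColor χ (δ x y) (δ y z)
  | _ => 0

lemma stepUpColoring_triple (δ : α → α → ℕ) (χ : ℕ → ℕ → Bool) {x y z : α}
    (hxy : x < y) (hyz : y < z) :
    stepUpColoring δ χ {x, y, z} = stepUpColor χ (δ x y) (δ y z) := by
  have hsort : ({x, y, z} : Finset α).sort (· ≤ ·) = [x, y, z] := by
    have hxz := hxy.trans hyz
    rw [sort_insert, sort_insert, sort_singleton] <;>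
      simp [hxy.le, hxz.le, hyz.le, hxy.ne, hxz.ne, hyz.ne]
  simp only [stepUpColoring, hsort]

lemma card_triple {x y z : α} (hxy : x < y) (hyz : y < z) : #({x, y, z} : Finset α) = 3 :=
  card_eq_three.mpr ⟨x, y, z, hxy.ne, (hxy.trans hyz).ne, hyz.ne, rfl⟩

lemma stepUpColor_eq_zero {χ : ℕ → ℕ → Bool} {d₁ d₂ : ℕ} (h : stepUpColor χ d₁ d₂ = 0) :
    d₁ < d₂ ∧ χ d₁ d₂ = false := by
  unfold stepUpColor at h
  split_ifs at h <;> grind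

lemma stepUpColor_eq_one {χ : ℕ → ℕ → Bool} {d₁ d₂ : ℕ} (h : stepUpColor χ d₁ d₂ = 1)
    (hne : d₁ ≠ d₂) : d₂ < d₁ ∧ χ d₂ d₁ = false := by
  unfold stepUpColor at h
  split_ifs at h <;> grind

lemma stepUpColor_eq_two {χ : ℕ → ℕ → Bool} {d₁ d₂ : ℕ} (h : stepUpColor χ d₁ d₂ = 2) :
    χ (min d₁ d₂) (max d₁ d₂) = true := by
  unfold stepUpColor at h
  split_ifs at h <;> grind

theorem IsSteppingUpDelta.exists_isMonoClique_of_monochromatic {δ : α → α → ℕ}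
    (hδ : IsSteppingUpDelta δ) {χ : ℕ → ℕ → Bool} {T : Finset α} {m a : ℕ} {c : Fin 3}
    (hm : ∀ x ∈ T, ∀ y ∈ T, x < y → δ x y < m) (ha : 2 ^ a ≤ #T)
    (hc : ∀ e ⊆ T, #e = 3 → stepUpColoring δ χ e = c) :
    ∃ R ⊆ range m, (#R = a ∧ IsMonoClique χ true R) ∨ (#R = #T - 1 ∧ IsMonoClique χ false R) := by
  have hT : T.Nonempty := card_pos.mp (lt_of_lt_of_le (Nat.two_pow_pos a) ha)
  have htriple : ∀ x ∈ T, ∀ y ∈ T, ∀ z ∈ T, x < y → y < z →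
      stepUpColor χ (δ x y) (δ y z) = c := by
    intro x hx y hy z hz hxy hyz
    rw [← stepUpColoring_triple δ χ hxy hyz]
    exact hc _ (by simp [insert_subset_iff, hx, hy, hz]) (card_triple hxy hyz)
  have hrange : ∀ R : Finset ℕ, (∀ r ∈ R, ∃ x ∈ T, ∃ y ∈ T, x < y ∧ δ x y = r) → R ⊆ range m := by
    intro R hR r hr
    obtain ⟨x, hx, y, hy, hxy, rfl⟩ := hR r hr
    exact mem_range.mpr (hm x hx y hy hxy)
  fin_cases c
  · obtain ⟨R, hR, hRval, hRχ⟩ := hδ.exists_isMonoClique_of_increasing hT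
      fun x hx y hy z hz hxy hyz => stepUpColor_eq_zero (htriple x hx y hy z hz hxy hyz)
    exact ⟨R, hrange R hRval, Or.inr ⟨hR, hRχ⟩⟩
  · obtain ⟨R, hR, hRval, hRχ⟩ := hδ.exists_isMonoClique_of_decreasing hT
      fun x hx y hy z hz hxy hyz =>
        stepUpColor_eq_one (htriple x hx y hy z hz hxy hyz) (hδ.ne hxy hyz)
    exact ⟨R, hrange R hRval, Or.inr ⟨hR, hRχ⟩⟩
  · obtain ⟨R, hR, hRval, hRχ⟩ := hδ.exists_isMonoClique_of_red a T ha
      fun x hx y hy z hz hxy hyz => stepUpColor_eq_two (htriple x hx y hy z hz hxy hyz)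
    exact ⟨R, hrange R hRval, Or.inl ⟨hR, hRχ⟩⟩

end SteppingUp

-- The `δ` of the paper, with `{0,1}^m` encoded as `range (2 ^ m)` by binary expansion.
def topBit (x y : ℕ) : ℕ := Nat.log 2 (x ^^^ y)

lemma topBit_lt_iff {x y : ℕ} (hxy : x ≠ y) (k : ℕ) :
    topBit x y < k ↔ x / 2 ^ k = y / 2 ^ k := by
  rw [topBit, Nat.log_lt_iff_lt_pow one_lt_two (Nat.xor_eq_zero_iff.not.mpr hxy),
    ← Nat.div_eq_zero_iff_lt (by positivity), Nat.xor_div_two_pow, Nat.xor_eq_zero_iff]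

lemma topBit_lt_of_lt_two_pow {x y m : ℕ} (hx : x < 2 ^ m) (hy : y < 2 ^ m) (hxy : x ≠ y) :
    topBit x y < m := by
  rw [topBit_lt_iff hxy, Nat.div_eq_of_lt hx, Nat.div_eq_of_lt hy]

lemma topBit_eq_max {x y z : ℕ} (hxy : x < y) (hyz : y < z) :
    topBit x z = max (topBit x y) (topBit y z) := by
  refine eq_of_forall_gt_iff fun k => ?_
  rw [max_lt_iff, topBit_lt_iff hxy.ne, topBit_lt_iff hyz.ne, topBit_lt_iff (hxy.trans hyz).ne]
  have := Nat.div_le_div_right (c := 2 ^ k) hxy.le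
  have := Nat.div_le_div_right (c := 2 ^ k) hyz.le
  omega

lemma topBit_ne {x y z : ℕ} (hxy : x < y) (hyz : y < z) : topBit x y ≠ topBit y z := by
  intro h
  set d := topBit x y
  have hx := (topBit_lt_iff hxy.ne (d + 1)).mp (Nat.lt_succ_self d)
  have hz := (topBit_lt_iff hyz.ne (d + 1)).mp (h ▸ Nat.lt_succ_self d)
  have hx' := (topBit_lt_iff hxy.ne d).not.mp (lt_irrefl d)
  have hz' := (topBit_lt_iff hyz.ne d).not.mp (h ▸ lt_irrefl d)
  simp only [pow_succ, ← Nat.div_div_eq_div_mul] at hx hz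
  have := Nat.div_le_div_right (c := 2 ^ d) hxy.le
  have := Nat.div_le_div_right (c := 2 ^ d) hyz.le
  omega

lemma isSteppingUpDelta_topBit : IsSteppingUpDelta topBit :=
  ⟨fun _ _ _ => topBit_eq_max, fun _ _ _ => topBit_ne⟩

section Ramsey

variable {α κ : Type*}

lemma exists_subset_forall_eq_of_card_le [Fintype κ] [Nonempty κ] {ι : Type*} (f : ι → α → κ)
    (F : Finset ι) {S : Finset α} {t : ℕ} (h : Fintype.card κ ^ #F * t ≤ #S) :
    ∃ S' ⊆ S, t ≤ #S' ∧ ∀ i ∈ F, ∀ z ∈ S', ∀ w ∈ S', f i z = f i w := by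
  classical
  induction F using Finset.induction_on generalizing S with
  | empty => exact ⟨S, subset_rfl, by simpa using h, by simp⟩
  | insert i F hi ih =>
    rw [card_insert_of_notMem hi, pow_succ', mul_assoc] at h
    obtain ⟨c, -, hc⟩ := exists_le_card_fiber_of_mul_le_card_of_maps_to
      (fun z _ => mem_univ (f i z)) univ_nonempty (by simpa using h)
    obtain ⟨S', hS', ht, hF⟩ := ih hc
    refine ⟨S', hS'.trans (filter_subset _ _), ht, ?_⟩
    intro j hj z hz w hw
    rcases mem_insert.mp hj with rfl | hj
    · rw [(mem_filter.mp (hS' hz)).2, (mem_filter.mp (hS' hw)).2]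
    · exact hF j hj z hz w hw

variable [LinearOrder α]

def IsEndHomogeneous (C : Finset α → κ) (P Y : Finset α) : Prop :=
  ∀ A ⊆ P ∪ Y, ∀ z ∈ Y, ∀ w ∈ Y, (∀ a ∈ A, a < z) → (∀ a ∈ A, a < w) →
    C (insert z A) = C (insert w A)

lemma IsEndHomogeneous.insert {C : Finset α → κ} {P Y S : Finset α} {a : α}
    (hY : IsEndHomogeneous C (insert a P) Y)
    (hPS : ∀ A ⊆ P, ∀ z ∈ S, ∀ w ∈ S, C (insert z A) = C (insert w A))
    (haS : a ∈ S) (hYS : Y ⊆ S) (haY : ∀ y ∈ Y, a < y) :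
    IsEndHomogeneous C P (insert a Y) := by
  intro A hA z hz w hw hAz hAw
  have hAP : (∀ x ∈ A, x < a) → A ⊆ P := fun hAa x hx => by
    rcases mem_union.mp (hA hx) with hxP | hxY
    · exact hxP
    · rcases mem_insert.mp hxY with hxa | hxY
      · exact absurd (hxa ▸ hAa x hx) (lt_irrefl a)
      · exact absurd (hAa x hx) (haY x hxY).not_gt
  rcases mem_insert.mp hz with rfl | hzY <;> rcases mem_insert.mp hw with rfl | hwY
  · rfl
  · exact hPS A (hAP hAz) _ haS w (hYS hwY)
  · exact hPS A (hAP hAw) z (hYS hzY) _ haS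
  · exact hY A (by rwa [insert_union, ← union_insert]) z hzY w hwY hAz hAw

-- With `p` points already chosen, a greedy step refines the pool so that `C (insert z A)` is
-- constant in `z` for each of the `2 ^ (p + 1)` subsets `A` of the chosen points.
def endHomogeneousBound (k : ℕ) : ℕ → ℕ → ℕ
  | 0, _ => 0
  | L + 1, p => k ^ 2 ^ (p + 1) * endHomogeneousBound k L (p + 1) + 1

variable [Fintype κ] [Nonempty κ]

lemma exists_isEndHomogeneous_of_prefix (C : Finset α → κ) (L : ℕ) :
    ∀ P S : Finset α, (∀ p ∈ P, ∀ s ∈ S, p < s) →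
    (∀ A ⊆ P, ∀ z ∈ S, ∀ w ∈ S, C (insert z A) = C (insert w A)) →
    endHomogeneousBound (Fintype.card κ) L #P ≤ #S →
    ∃ Y ⊆ S, #Y = L ∧ IsEndHomogeneous C P Y := by
  induction L with
  | zero => exact fun _ _ _ _ _ => ⟨∅, empty_subset _, rfl, by simp [IsEndHomogeneous]⟩
  | succ L ih =>
    intro P S hPS hinv hS
    simp only [endHomogeneousBound] at hS
    have hne : S.Nonempty := card_pos.mp (by omega)
    set a := S.min' hne
    have haP : a ∉ P := fun h => lt_irrefl a (hPS a h a (S.min'_mem hne))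
    obtain ⟨S', hS'S, hS'card, hS'⟩ := exists_subset_forall_eq_of_card_le
      (fun A z => C (insert z A)) (insert a P).powerset (S := S.erase a)
      (t := endHomogeneousBound (Fintype.card κ) L (#P + 1))
      (by rw [card_powerset, card_insert_of_notMem haP, card_erase_of_mem (S.min'_mem hne)]; omega)
    have haS' : ∀ z ∈ S', a < z := fun z hz => S.min'_lt_of_mem_erase_min' hne (hS'S hz)
    obtain ⟨Y, hYS', hYcard, hY⟩ := ih (insert a P) S'
      (fun p hp s hs => (mem_insert.mp hp).elim (fun h => h ▸ haS' s hs)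
        fun hp => hPS p hp s (mem_of_mem_erase (hS'S hs)))
      (fun A hA z hz w hw => hS' A (mem_powerset.mpr hA) z hz w hw)
      (by rwa [card_insert_of_notMem haP])
    have hYS : Y ⊆ S := (hYS'.trans hS'S).trans (erase_subset _ _)
    refine ⟨insert a Y, insert_subset (S.min'_mem hne) hYS, ?_,
      hY.insert hinv (S.min'_mem hne) hYS fun y hy => haS' y (hYS' hy)⟩
    rw [card_insert_of_notMem fun h => lt_irrefl a (haS' a (hYS' h)), hYcard]

lemma exists_isEndHomogeneous (C : Finset α → κ) (L : ℕ) {X : Finset α}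
    (hX : Fintype.card κ * endHomogeneousBound (Fintype.card κ) L 0 ≤ #X) :
    ∃ Y ⊆ X, #Y = L ∧ IsEndHomogeneous C ∅ Y := by
  obtain ⟨S, hSX, hScard, hS⟩ := exists_subset_forall_eq_of_card_le
    (fun A z => C (insert z A)) (∅ : Finset α).powerset (S := X) (by simpa using hX)
  obtain ⟨Y, hYS, hY⟩ := exists_isEndHomogeneous_of_prefix C L ∅ S (by simp)
    (fun A hA z hz w hw => hS A (mem_powerset.mpr hA) z hz w hw) hScard
  exact ⟨Y, hYS.trans hSX, hY⟩

theorem hypergraph_ramsey (r n : ℕ) : ∃ N, ∀ X : Finset α, N ≤ #X → ∀ C : Finset α → κ,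
    ∃ T ⊆ X, #T = n ∧ ∃ c, ∀ e ⊆ T, #e = r → C e = c := by
  induction r generalizing n with
  | zero =>
    refine ⟨n, fun X hX C => ?_⟩
    obtain ⟨T, hTX, hT⟩ := exists_subset_card_eq hX
    exact ⟨T, hTX, hT, C ∅, fun e _ he => by rw [card_eq_zero.mp he]⟩
  | succ r ih =>
    obtain ⟨N, hN⟩ := ih n
    refine ⟨Fintype.card κ * endHomogeneousBound (Fintype.card κ) (N + 1) 0, fun X hX C => ?_⟩
    obtain ⟨Y, hYX, hYcard, hY⟩ := exists_isEndHomogeneous C (N + 1) hX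
    have hYne : Y.Nonempty := card_pos.mp (by omega)
    set top := Y.max' hYne
    obtain ⟨T, hTY, hTcard, c, hc⟩ := hN (Y.erase top)
      (by rw [card_erase_of_mem (Y.max'_mem hYne)]; omega) fun A => C (insert top A)
    -- end-homogeneity lets us replace the largest element of `e` by `top`
    refine ⟨T, hTY.trans ((erase_subset _ _).trans hYX), hTcard, c, fun e heT he => ?_⟩
    have hene : e.Nonempty := card_pos.mp (by omega)
    set b := e.max' hene
    have hAT : e.erase b ⊆ T := (erase_subset _ _).trans heT
    have hAY : e.erase b ⊆ Y := fun x hx => mem_of_mem_erase (hTY (hAT hx))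
    rw [← insert_erase (e.max'_mem hene),
      hY (e.erase b) (by simpa using hAY) b (mem_of_mem_erase (hTY (heT (e.max'_mem hene))))
        top (Y.max'_mem hYne) (fun x hx => e.lt_max'_of_mem_erase_max' hene hx)
        (fun x hx => Y.lt_max'_of_mem_erase_max' hYne (hTY (hAT hx)))]
    exact hc _ hAT (by rw [card_erase_of_mem (e.max'_mem hene), he]; rfl)

end Ramsey

lemma HasRamsey3Color.mono {N M n : ℕ} (h : HasRamsey3Color N n) (hNM : N ≤ M) :
    HasRamsey3Color M n := by
  intro C
  obtain ⟨T, hT, hTn, hc⟩ := h C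
  exact ⟨T, hT.trans (range_subset_range.mpr hNM), hTn, hc⟩

lemma exists_hasRamsey3Color (n : ℕ) : ∃ N, HasRamsey3Color N n := by
  obtain ⟨N, hN⟩ := hypergraph_ramsey (α := ℕ) (κ := Fin 3) 3 n
  exact ⟨N, fun C => hN (range N) (card_range N).ge C⟩

lemma lt_r3three_of_not_hasRamsey3Color {N n : ℕ} (h : ¬HasRamsey3Color N n) :
    N < r3three n := by
  by_contra! hle
  obtain ⟨M, hM⟩ := exists_hasRamsey3Color n
  have hmin : HasRamsey3Color (r3three n) n :=
    Nat.sInf_mem (s := {N | HasRamsey3Color N n}) ⟨M, hM⟩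
  exact h (hmin.mono hle)

lemma not_hasRamsey2_zero {a b : ℕ} (ha : a ≠ 0) (hb : b ≠ 0) : ¬HasRamsey2 0 a b := by
  intro h
  obtain ⟨T, hT, hTab⟩ := h fun _ _ => true
  rw [range_zero, subset_empty] at hT
  subst hT
  rcases hTab with ⟨h0, -⟩ | ⟨h0, -⟩
  · exact ha h0.symm
  · exact hb h0.symm

lemma not_hasRamsey2_r2_sub_one {a b : ℕ} (ha : a ≠ 0) (hb : b ≠ 0) :
    ¬HasRamsey2 (r2 a b - 1) a b := by
  rcases Nat.eq_zero_or_pos (r2 a b) with h0 | hpos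
  · rw [h0]
    exact not_hasRamsey2_zero ha hb
  · exact Nat.notMem_of_lt_sInf (Nat.sub_lt hpos one_pos)

theorem not_hasRamsey3Color_two_pow {m n a : ℕ} (ha : 2 ^ a ≤ n) (h : ¬HasRamsey2 m a (n - 1)) :
    ¬HasRamsey3Color (2 ^ m) n := by
  obtain ⟨χ, hχ⟩ := not_forall.mp h
  intro hR
  obtain ⟨T, hTm, hTn, c, hc⟩ := hR (stepUpColoring topBit χ)
  have hm : ∀ x ∈ T, ∀ y ∈ T, x < y → topBit x y < m := fun x hx y hy hxy =>
    topBit_lt_of_lt_two_pow (mem_range.mp (hTm hx)) (mem_range.mp (hTm hy)) hxy.ne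
  obtain ⟨R, hRm, hR⟩ :=
    isSteppingUpDelta_topBit.exists_isMonoClique_of_monochromatic hm (hTn ▸ ha) hc
  exact hχ ⟨R, hRm, hTn ▸ hR⟩

/-- `r₃(n,n,n) > 2^{r(⌊log₂ n⌋, n-1) - 1}`. -/
theorem r3three_lower (n : ℕ) (hn : 2 ≤ n) :
    2 ^ (r2 (Nat.log 2 n) (n - 1) - 1) < r3three n :=
  lt_r3three_of_not_hasRamsey3Color <|
    not_hasRamsey3Color_two_pow (Nat.pow_log_le_self 2 (by omega)) <|
      not_hasRamsey2_r2_sub_one (Nat.log_pos one_lt_two hn).ne' (by omega)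
end

section
/- The Ramsey number r(K_4^{(3)} \setminus e, K_n^{(3)}) is at most (2en)^n, where K_4^{(3)} \setminus e is the 3-uniform hypergraph on 4 vertices with 3 edges. -/
open Finset


def gfun (n a k : ℕ) : ℕ := 2 ^ (n - a - k) * (2 * n) ^ (n - a)

lemma gpos (n a k : ℕ) : 0 < gfun n a k := by
  unfold gfun
  rcases Nat.eq_zero_or_pos n with rfl | hn
  · simp
  · positivity

lemma gstep_s17 (n a k : ℕ) (h : a + k < n) :
    gfun n a (k+1) + 1 + k * gfun n (a+1) (k-1) ≤ gfun n a k + k := by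
  obtain ⟨d, rfl⟩ : ∃ d, n = a + k + 1 + d := ⟨n - (a+k+1), by omega⟩
  unfold gfun
  cases k with
  | zero =>
    have e1 : a + 0 + 1 + d - a - 0 = d + 1 := by omega
    have e2 : a + 0 + 1 + d - a - (0+1) = d := by omega
    have e3 : a + 0 + 1 + d - a = 1 + d := by omega
    rw [e1, e2, e3]
    have hp : 0 < (2:ℕ)^d * (2 * (a + 0 + 1 + d))^(1+d) := by positivity
    have h2 : (2:ℕ)^(d+1) = 2 * 2^d := by ring
    rw [h2]
    nlinarith [hp]
  | succ k' =>
    have e3 : a + (k'+1) + 1 + d - a = k' + 2 + d := by omega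
    have e4 : a + (k'+1) + 1 + d - (a+1) = k' + 1 + d := by omega
    rw [e3, e4]
    have e1' : k' + 2 + d - (k'+1) = d + 1 := by omega
    have e2' : k' + 2 + d - (k'+1+1) = d := by omega
    have e5' : k' + 1 + d - (k'+1-1) = d + 1 := by omega
    rw [e1', e2', e5']
    have hq : (1:ℕ) ≤ (2 * (a + (k'+1) + 1 + d))^(k'+1+d) := Nat.one_le_pow _ _ (by omega)
    have hp : (1:ℕ) ≤ (2:ℕ)^d := Nat.one_le_two_pow
    have hM : (2 * (a + (k'+1) + 1 + d))^(k'+2+d)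
        = (2 * (a + (k'+1) + 1 + d)) * (2 * (a + (k'+1) + 1 + d))^(k'+1+d) := by
      rw [show k' + 2 + d = (k' + 1 + d) + 1 from by omega, pow_succ]
      ring
    have h2 : (2:ℕ)^(d+1) = 2 * 2^d := by ring
    rw [hM, h2]
    set p := (2:ℕ)^d with hpdef
    set q := (2 * (a + (k'+1) + 1 + d))^(k'+1+d) with hqdef
    nlinarith [hp, hq, Nat.mul_le_mul hp hq]

lemma t12 (a b c : ℕ) : ({a,b,c} : Finset ℕ) = {b,a,c} := Finset.insert_comm a b {c}

lemma t23 (a b c : ℕ) : ({a,b,c} : Finset ℕ) = {a,c,b} := by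
  show insert a ({b,c} : Finset ℕ) = insert a {c,b}
  rw [Finset.pair_comm]

lemma trot (a b c : ℕ) : ({a,b,c} : Finset ℕ) = {c,a,b} := by
  rw [t23, t12]

lemma baseT (N n : ℕ) (C : Finset ℕ → Bool) (A S : Finset ℕ)
    (hA : A ⊆ Finset.range N) (hS : S ⊆ Finset.range N)
    (hAS : Disjoint A S)
    (hfull : A.card + S.card = n)
    (I1 : ∀ a ∈ A, ∀ u ∈ A ∪ S, ∀ v ∈ A ∪ S, a ≠ u → a ≠ v → u ≠ v → C {a,u,v} = false)
    (I2 : ∀ s ∈ S, ∀ t ∈ S, ∀ y ∈ S, s ≠ t → s ≠ y → t ≠ y → C {s,t,y} = false) :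
    ∃ T ⊆ Finset.range N, T.card = n ∧ ∀ e ⊆ T, e.card = 3 → C e = false := by
  refine ⟨A ∪ S, Finset.union_subset hA hS, ?_, ?_⟩
  · rw [Finset.card_union_of_disjoint hAS, hfull]
  · intro e he hcard
    obtain ⟨u, v, w, huv, huw, hvw, rfl⟩ := Finset.card_eq_three.mp hcard
    have hu : u ∈ A ∪ S := he (by simp)
    have hv : v ∈ A ∪ S := he (by simp)
    have hw : w ∈ A ∪ S := he (by simp)
    rcases Finset.mem_union.mp hu with huA | huS
    · exact I1 u huA v hv w hw huv huw hvw
    · rcases Finset.mem_union.mp hv with hvA | hvS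
      · rw [t12]; exact I1 v hvA u hu w hw (Ne.symm huv) hvw huw
      · rcases Finset.mem_union.mp hw with hwA | hwS
        · rw [trot]; exact I1 w hwA u hu v hv (Ne.symm huw) (Ne.symm hvw) huv
        · exact I2 u huS v hvS w hwS huv huw hvw

lemma keyT (N n : ℕ) (C : Finset ℕ → Bool)
    (hC : ∀ a b c d : ℕ, a ∈ Finset.range N → b ∈ Finset.range N → c ∈ Finset.range N →
      d ∈ Finset.range N → a ≠ b → a ≠ c → a ≠ d → b ≠ c → b ≠ d → c ≠ d →
      C {a,b,c} = true → C {a,b,d} = true → C {a,c,d} = true → False) :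
    ∀ m : ℕ, ∀ X A S : Finset ℕ, X.card ≤ m →
      A ⊆ Finset.range N → S ⊆ Finset.range N → X ⊆ Finset.range N →
      Disjoint A S → Disjoint A X → Disjoint S X →
      A.card + S.card ≤ n →
      (A.card + S.card = n ∨ gfun n A.card S.card ≤ X.card) →
      (∀ a ∈ A, ∀ u ∈ A ∪ S ∪ X, ∀ v ∈ A ∪ S ∪ X, a ≠ u → a ≠ v → u ≠ v →
        C {a,u,v} = false) →
      (∀ s ∈ S, ∀ t ∈ S, ∀ y ∈ S ∪ X, s ≠ t → s ≠ y → t ≠ y → C {s,t,y} = false) →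
      ∃ T ⊆ Finset.range N, T.card = n ∧ ∀ e ⊆ T, e.card = 3 → C e = false := by
  intro m
  induction m with
  | zero =>
    intro X A S hXm hA hS hX hAS hAX hSX hcard hH I1 I2
    rcases hH with hfull | hge
    · exact baseT N n C A S hA hS hAS hfull
        (fun a ha u hu v hv h1 h2 h3 =>
          I1 a ha u (Finset.mem_union_left X hu) v (Finset.mem_union_left X hv) h1 h2 h3)
        (fun s hs t ht y hy h1 h2 h3 =>
          I2 s hs t ht y (Finset.mem_union_left X hy) h1 h2 h3)
    · exact absurd hge (by have := gpos n A.card S.card; omega)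
  | succ m ih =>
    intro X A S hXm hA hS hX hAS hAX hSX hcard hH I1 I2
    by_cases hfull : A.card + S.card = n
    · exact baseT N n C A S hA hS hAS hfull
        (fun a ha u hu v hv h1 h2 h3 =>
          I1 a ha u (Finset.mem_union_left X hu) v (Finset.mem_union_left X hv) h1 h2 h3)
        (fun s hs t ht y hy h1 h2 h3 =>
          I2 s hs t ht y (Finset.mem_union_left X hy) h1 h2 h3)
    · have hlt : A.card + S.card < n := lt_of_le_of_ne hcard hfull
      have hge : gfun n A.card S.card ≤ X.card := hH.resolve_left hfull
      have hXpos : 0 < X.card := lt_of_lt_of_le (gpos n _ _) hge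
      obtain ⟨x, hxX⟩ := Finset.card_pos.mp hXpos
      have hxS : x ∉ S := Finset.disjoint_right.mp hSX hxX
      have hxA : x ∉ A := Finset.disjoint_right.mp hAX hxX
      set B : ℕ → Finset ℕ :=
        fun s => (X.erase x).filter (fun y => C {s, x, y} = true) with hBdef
      have hBsub : ∀ s, B s ⊆ X.erase x := fun s => Finset.filter_subset _ _
      have hBX : ∀ s, B s ⊆ X := fun s => (hBsub s).trans (Finset.erase_subset _ _)
      by_cases hheavy : ∃ s ∈ S, gfun n (A.card + 1) (S.card - 1) ≤ (B s).card
      · -- HEAVY CASE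
        obtain ⟨s, hsS, hsB⟩ := hheavy
        have hsA : s ∉ A := Finset.disjoint_right.mp hAS hsS
        have hsX : s ∉ X := Finset.disjoint_left.mp hSX hsS
        have hsx : s ≠ x := fun h => hsX (h ▸ hxX)
        have hblue : ∀ u ∈ B s, ∀ v ∈ B s, u ≠ v → C {s,u,v} = false := by
          intro u hu v hv huv
          cases hq : C {s,u,v} with
          | false => rfl
          | true =>
            exfalso
            obtain ⟨hu', hcu⟩ := Finset.mem_filter.mp hu
            obtain ⟨hv', hcv⟩ := Finset.mem_filter.mp hv
            have huX : u ∈ X := Finset.mem_of_mem_erase hu'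
            have hvX : v ∈ X := Finset.mem_of_mem_erase hv'
            exact hC s x u v (hS hsS) (hX hxX) (hX huX) (hX hvX) hsx
              (fun h => hsX (h ▸ huX)) (fun h => hsX (h ▸ hvX))
              (fun h => (Finset.ne_of_mem_erase hu') h.symm)
              (fun h => (Finset.ne_of_mem_erase hv') h.symm)
              huv hcu hcv hq
        have hsubU : insert s A ∪ S.erase s ∪ B s ⊆ A ∪ S ∪ X := by
          intro y hy
          rcases Finset.mem_union.mp hy with hy' | hyB
          · rcases Finset.mem_union.mp hy' with hyA' | hyS'
            · rcases Finset.mem_insert.mp hyA' with rfl | hyA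
              · exact Finset.mem_union_left _ (Finset.mem_union_right _ hsS)
              · exact Finset.mem_union_left _ (Finset.mem_union_left _ hyA)
            · exact Finset.mem_union_left _
                (Finset.mem_union_right _ (Finset.mem_of_mem_erase hyS'))
          · exact Finset.mem_union_right _ (hBX s hyB)
        have hcA' : (insert s A).card = A.card + 1 := Finset.card_insert_of_notMem hsA
        have hcS' : (S.erase s).card = S.card - 1 := Finset.card_erase_of_mem hsS
        have hSpos : 0 < S.card := Finset.card_pos.mpr ⟨s, hsS⟩
        have hBm : (B s).card ≤ m := by
          have h1 : (B s).card ≤ (X.erase x).card := Finset.card_le_card (hBsub s)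
          have h2 : (X.erase x).card = X.card - 1 := Finset.card_erase_of_mem hxX
          omega
        apply ih (B s) (insert s A) (S.erase s) hBm
          (Finset.insert_subset (hS hsS) hA)
          ((Finset.erase_subset _ _).trans hS)
          ((hBX s).trans hX)
        · rw [Finset.disjoint_left]
          intro y hy hy'
          rcases Finset.mem_insert.mp hy with rfl | hyA
          · exact (Finset.notMem_erase y S) hy'
          · exact Finset.disjoint_left.mp hAS hyA (Finset.mem_of_mem_erase hy')
        · rw [Finset.disjoint_left]
          intro y hy hy'
          rcases Finset.mem_insert.mp hy with heq | hyA
          · exact hsX (heq ▸ hBX s hy')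
          · exact Finset.disjoint_left.mp hAX hyA (hBX s hy')
        · exact hSX.mono (Finset.erase_subset _ _) (hBX s)
        · rw [hcA', hcS']; omega
        · rw [hcA', hcS']; exact Or.inr hsB
        · -- I1'
          intro a ha u hu v hv hau hav huv
          rcases Finset.mem_insert.mp ha with rfl | haA
          · rcases Finset.mem_union.mp hu with hu' | huB
            · rcases Finset.mem_union.mp hu' with huA' | huS'
              · rcases Finset.mem_insert.mp huA' with rfl | huA
                · exact absurd rfl hau
                · rw [t12]
                  exact I1 u huA a (Finset.mem_union_left _ (Finset.mem_union_right _ hsS))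
                    v (hsubU hv) (Ne.symm hau) huv hav
              · have huS := Finset.mem_of_mem_erase huS'
                rcases Finset.mem_union.mp hv with hv' | hvB
                · rcases Finset.mem_union.mp hv' with hvA' | hvS'
                  · rcases Finset.mem_insert.mp hvA' with rfl | hvA
                    · exact absurd rfl hav
                    · rw [trot]
                      exact I1 v hvA a
                        (Finset.mem_union_left _ (Finset.mem_union_right _ hsS))
                        u (Finset.mem_union_left _ (Finset.mem_union_right _ huS))
                        (Ne.symm hav) (Ne.symm huv) hau
                  · exact I2 a hsS u huS v
                      (Finset.mem_union_left _ (Finset.mem_of_mem_erase hvS')) hau hav huv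
                · exact I2 a hsS u huS v
                    (Finset.mem_union_right _ (hBX a hvB)) hau hav huv
            · rcases Finset.mem_union.mp hv with hv' | hvB
              · rcases Finset.mem_union.mp hv' with hvA' | hvS'
                · rcases Finset.mem_insert.mp hvA' with rfl | hvA
                  · exact absurd rfl hav
                  · rw [trot]
                    exact I1 v hvA a
                      (Finset.mem_union_left _ (Finset.mem_union_right _ hsS))
                      u (Finset.mem_union_right _ (hBX a huB))
                      (Ne.symm hav) (Ne.symm huv) hau
                · rw [t23]
                  exact I2 a hsS v (Finset.mem_of_mem_erase hvS') u
                    (Finset.mem_union_right _ (hBX a huB)) hav hau (Ne.symm huv)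
              · exact hblue u huB v hvB huv
          · exact I1 a haA u (hsubU hu) v (hsubU hv) hau hav huv
        · -- I2'
          intro s1 hs1 t ht y hy h1 h2 h3
          refine I2 s1 (Finset.mem_of_mem_erase hs1) t (Finset.mem_of_mem_erase ht) y
            ?_ h1 h2 h3
          rcases Finset.mem_union.mp hy with hy' | hyB
          · exact Finset.mem_union_left _ (Finset.mem_of_mem_erase hy')
          · exact Finset.mem_union_right _ (hBX s hyB)
      · -- LIGHT CASE
        push_neg at hheavy
        set X' : Finset ℕ := (X.erase x) \ S.biUnion B with hX'def
        have hX'sub : X' ⊆ X.erase x := Finset.sdiff_subset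
        have hX'X : X' ⊆ X := hX'sub.trans (Finset.erase_subset _ _)
        have hxX' : x ∉ X' := fun h => (Finset.notMem_erase x X) (hX'sub h)
        have hcS' : (insert x S).card = S.card + 1 := Finset.card_insert_of_notMem hxS
        -- card bound
        have hcard' : gfun n A.card (S.card + 1) ≤ X'.card := by
          have h1 : (S.biUnion B).card ≤ ∑ s ∈ S, (B s).card := Finset.card_biUnion_le
          have h2 : ∑ s ∈ S, ((B s).card + 1)
              ≤ S.card * gfun n (A.card + 1) (S.card - 1) := by
            rw [← smul_eq_mul]
            exact Finset.sum_le_card_nsmul _ _ _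
              (fun s hs => by have := hheavy s hs; omega)
          have h3 : ∑ s ∈ S, ((B s).card + 1) = (∑ s ∈ S, (B s).card) + S.card := by
            rw [Finset.sum_add_distrib, Finset.sum_const, smul_eq_mul, mul_one]
          have h4 : (X.erase x).card = X.card - 1 := Finset.card_erase_of_mem hxX
          have h5 : (X.erase x).card - (S.biUnion B).card ≤ X'.card :=
            Finset.le_card_sdiff _ _
          have hstep := gstep_s17 n A.card S.card hlt
          obtain ⟨P, hP⟩ : ∃ P, S.card * gfun n (A.card + 1) (S.card - 1) = P := ⟨_, rfl⟩
          rw [hP] at h2 hstep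
          omega
        have hX'm : X'.card ≤ m := by
          have h1 : X'.card ≤ (X.erase x).card := Finset.card_le_card hX'sub
          have h2 : (X.erase x).card = X.card - 1 := Finset.card_erase_of_mem hxX
          omega
        have hsubU : A ∪ insert x S ∪ X' ⊆ A ∪ S ∪ X := by
          intro y hy
          rcases Finset.mem_union.mp hy with hy' | hyX'
          · rcases Finset.mem_union.mp hy' with hyA | hyS'
            · exact Finset.mem_union_left _ (Finset.mem_union_left _ hyA)
            · rcases Finset.mem_insert.mp hyS' with rfl | hyS
              · exact Finset.mem_union_right _ hxX
              · exact Finset.mem_union_left _ (Finset.mem_union_right _ hyS)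
          · exact Finset.mem_union_right _ (hX'X hyX')
        have hpair : ∀ t ∈ S, ∀ y, y ∈ insert x S ∪ X' → t ≠ y → x ≠ y →
            C {t, x, y} = false := by
          intro t htS y hy hty hxy
          rcases Finset.mem_union.mp hy with hy' | hyX'
          · rcases Finset.mem_insert.mp hy' with rfl | hyS
            · exact absurd rfl hxy
            · rw [t23]
              exact I2 t htS y hyS x (Finset.mem_union_right _ hxX) hty
                (fun h => hxS (h ▸ htS)) (fun h => hxS (h ▸ hyS))
          · obtain ⟨hyE, hynB⟩ := Finset.mem_sdiff.mp hyX'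
            have hnB : y ∉ B t := fun hmem => hynB (Finset.mem_biUnion.mpr ⟨t, htS, hmem⟩)
            cases hq : C {t, x, y} with
            | false => rfl
            | true => exact absurd (Finset.mem_filter.mpr ⟨hyE, hq⟩) hnB
        apply ih X' A (insert x S) hX'm hA
          (Finset.insert_subset (hX hxX) hS)
          (hX'X.trans hX)
        · exact Finset.disjoint_insert_right.mpr ⟨hxA, hAS⟩
        · exact hAX.mono_right hX'X
        · rw [Finset.disjoint_left]
          intro y hy hy'
          rcases Finset.mem_insert.mp hy with rfl | hyS
          · exact hxX' hy'
          · exact Finset.disjoint_left.mp hSX hyS (hX'X hy')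
        · rw [hcS']; omega
        · rw [hcS']; exact Or.inr hcard'
        · intro a ha u hu v hv h1 h2 h3
          exact I1 a ha u (hsubU hu) v (hsubU hv) h1 h2 h3
        · intro s1 hs1 t ht y hy h1 h2 h3
          rcases Finset.mem_insert.mp hs1 with rfl | hs1S
          · rcases Finset.mem_insert.mp ht with rfl | htS
            · exact absurd rfl h1
            · rw [t12]
              exact hpair t htS y hy h3 h2
          · rcases Finset.mem_insert.mp ht with rfl | htS
            · exact hpair s1 hs1S y hy h2 h3
            · refine I2 s1 hs1S t htS y ?_ h1 h2 h3
              rcases Finset.mem_union.mp hy with hy' | hyX'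
              · rcases Finset.mem_insert.mp hy' with rfl | hyS
                · exact Finset.mem_union_right _ hxX
                · exact Finset.mem_union_left _ hyS
              · exact Finset.mem_union_right _ (hX'X hyX')


/-- `N` is Ramsey for `(K₄⁽³⁾ \ e, Kₙ⁽³⁾)`: every red-blue coloring of the triples of
`{0, …, N-1}` contains a red copy of the 3-uniform hypergraph on 4 vertices with 3 edges,
or a blue set of size `n` (`true` = red, `false` = blue). -/
def HasRamseyK4e (N n : ℕ) : Prop :=
  ∀ C : Finset ℕ → Bool,
    (∃ a b c d : ℕ, a ∈ Finset.range N ∧ b ∈ Finset.range N ∧ c ∈ Finset.range N ∧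
      d ∈ Finset.range N ∧ a ≠ b ∧ a ≠ c ∧ a ≠ d ∧ b ≠ c ∧ b ≠ d ∧ c ≠ d ∧
      C {a, b, c} = true ∧ C {a, b, d} = true ∧ C {a, c, d} = true) ∨
    (∃ T : Finset ℕ, T ⊆ Finset.range N ∧ T.card = n ∧
      ∀ e ⊆ T, e.card = 3 → C e = false)

/-- The Ramsey number `r(K₄⁽³⁾ \ e, Kₙ⁽³⁾)`. -/
noncomputable def rK4e (n : ℕ) : ℕ := sInf {N : ℕ | HasRamseyK4e N n}

lemma hasRamsey_explicit (n : ℕ) : HasRamseyK4e (2 ^ n * (2 * n) ^ n) n := by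
  intro C
  by_cases hred : (∃ a b c d : ℕ, a ∈ Finset.range (2 ^ n * (2 * n) ^ n) ∧
      b ∈ Finset.range (2 ^ n * (2 * n) ^ n) ∧ c ∈ Finset.range (2 ^ n * (2 * n) ^ n) ∧
      d ∈ Finset.range (2 ^ n * (2 * n) ^ n) ∧ a ≠ b ∧ a ≠ c ∧ a ≠ d ∧ b ≠ c ∧ b ≠ d ∧
      c ≠ d ∧ C {a, b, c} = true ∧ C {a, b, d} = true ∧ C {a, c, d} = true)
  · exact Or.inl hred
  · refine Or.inr ?_
    have hC : ∀ a b c d : ℕ, a ∈ Finset.range (2 ^ n * (2 * n) ^ n) →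
        b ∈ Finset.range (2 ^ n * (2 * n) ^ n) → c ∈ Finset.range (2 ^ n * (2 * n) ^ n) →
        d ∈ Finset.range (2 ^ n * (2 * n) ^ n) → a ≠ b → a ≠ c → a ≠ d → b ≠ c → b ≠ d →
        c ≠ d → C {a,b,c} = true → C {a,b,d} = true → C {a,c,d} = true → False := by
      intro a b c d ha hb hc hd h1 h2 h3 h4 h5 h6 e1 e2 e3
      exact hred ⟨a, b, c, d, ha, hb, hc, hd, h1, h2, h3, h4, h5, h6, e1, e2, e3⟩
    exact keyT (2 ^ n * (2 * n) ^ n) n C hC ((Finset.range (2 ^ n * (2 * n) ^ n)).card)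
      (Finset.range (2 ^ n * (2 * n) ^ n)) ∅ ∅ le_rfl (by simp) (by simp) subset_rfl
      (by simp) (by simp) (by simp) (by simp)
      (Or.inr (by simp [gfun, Finset.card_range])) (by simp) (by simp)

/-- `r(K₄⁽³⁾ \ e, Kₙ⁽³⁾) ≤ (2en)ⁿ`. -/
theorem rK4e_le (n : ℕ) :
    (rK4e n : ℝ) ≤ (2 * Real.exp 1 * n) ^ n := by
  have hle : rK4e n ≤ 2 ^ n * (2 * n) ^ n :=
    Nat.sInf_le (show _ ∈ {N : ℕ | HasRamseyK4e N n} from hasRamsey_explicit n)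
  have h1 : (rK4e n : ℝ) ≤ ((2 ^ n * (2 * n) ^ n : ℕ) : ℝ) := by exact_mod_cast hle
  refine h1.trans ?_
  have h2 : ((2 ^ n * (2 * n) ^ n : ℕ) : ℝ) = ((2 : ℝ) * (2 * (n : ℝ))) ^ n := by
    push_cast
    rw [← mul_pow]
  rw [h2]
  apply pow_le_pow_left₀ (by positivity)
  have he : (2 : ℝ) ≤ Real.exp 1 := by
    have := Real.exp_one_gt_d9
    linarith
  nlinarith [he, Nat.cast_nonneg (α := ℝ) n]
end
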